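/- arXiv:1912.04027 — 10 statements merged into one kernel-verified Lean document; each statement's English description precedes it below -/
import Mathlib

section
/- Let M be a topological space and φ : M × ℝ → M a flow on M. Let W ⊂ M be an open set with nonempty boundary such that every egress point of W is a strict egress point (W⁻ = W⁻⁻). Suppose Γ ⊂ W ∪ W⁻ is a set such that Γ ∩ W⁻ is a retract of W⁻ but Γ ∩ W⁻ is not a retract of Γ. Then there exists a point x ∈ Γ such that σ(x) = ∞, i.e., the forward half-trajectory {φ(x,t) : t ∈ [0,τ)} is contained in W for every τ ≥ 0. -/
/-!
If every point of `Γ` left `W`, the first exit time `T` would be continuous on `Γ`: it is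
lower semicontinuous because `W` is open and `[0, c]` is compact, and upper semicontinuous
because the exit point is a strict egress point, so the orbit is outside `closure W` shortly
after `T` and nearby orbits are too. Then `x ↦ φ x (T x)` maps `Γ` continuously into `W⁻`,
fixing `Γ ∩ W⁻`; composed with the retraction of `W⁻` onto `Γ ∩ W⁻` it retracts `Γ` onto
`Γ ∩ W⁻`, which is excluded.
-/

open scoped ENNReal

/-- The set of egress points of an open set `W` with respect to the flow `φ`:
boundary points `x` such that `φ x t ∈ W` for all `t` in some interval `(-ε, 0)`. -/
def flowEgress {M : Type*} [TopologicalSpace M] (φ : M → ℝ → M) (W : Set M) : Set M :=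
  {x ∈ frontier W | ∃ ε > (0 : ℝ), ∀ t ∈ Set.Ioo (-ε) (0 : ℝ), φ x t ∈ W}

/-- The set of strict egress points of `W` with respect to the flow `φ`:
egress points `x` such that `φ x t ∉ W ∪ ∂W` for all `t` in some interval `(0, ε)`. -/
def flowStrictEgress {M : Type*} [TopologicalSpace M] (φ : M → ℝ → M) (W : Set M) : Set M :=
  {x ∈ flowEgress φ W | ∃ ε > (0 : ℝ), ∀ t ∈ Set.Ioo (0 : ℝ) ε, φ x t ∉ W ∪ frontier W}

/-- The egress time `σ(x) = sup {τ ≥ 0 : φ x t ∈ W for all t ∈ [0, τ)}`, as an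
extended nonnegative real (`⊤` meaning the half-trajectory never leaves `W`).
For `x ∈ ∂W` this supremum is `0`. -/
noncomputable def flowEgressTime {M : Type*} [TopologicalSpace M] (φ : M → ℝ → M)
    (W : Set M) (x : M) : ℝ≥0∞ :=
  sSup {τ : ℝ≥0∞ | ∀ t : ℝ, 0 ≤ t → ENNReal.ofReal t < τ → φ x t ∈ W}

/-- `A` is a retract of `B`: there is a continuous map `r : B → X` with values in `A`
fixing every point of `A ∩ B`. -/
def IsRetractOf {X : Type*} [TopologicalSpace X] (A B : Set X) : Prop :=
  ∃ r : B → X, Continuous r ∧ (∀ b : B, r b ∈ A) ∧ ∀ b : B, (b : X) ∈ A → r b = b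

open Set Filter Topology Function

theorem IsRetractOf.of_mapsTo {X : Type*} [TopologicalSpace X] {A B C : Set X}
    (hAB : IsRetractOf A B) (g : C → X) (hg : Continuous g) (hgB : ∀ c, g c ∈ B)
    (hgA : ∀ c : C, (c : X) ∈ A → g c = c) : IsRetractOf A C := by
  obtain ⟨r, hr, hrA, hrfix⟩ := hAB
  refine ⟨fun c => r ⟨g c, hgB c⟩, hr.comp (hg.subtype_mk hgB), fun c => hrA _, fun c hc => ?_⟩
  have hgc : (⟨g c, hgB c⟩ : B) = ⟨c, hgA c hc ▸ hgB c⟩ := Subtype.ext (hgA c hc)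
  change r ⟨g c, hgB c⟩ = c
  rw [hgc, hrfix _ hc]

section

variable {M : Type*} {φ : M → ℝ → M} {W : Set M} {x : M}

/-- This is `0`, the junk value of `sInf ∅`, when the forward orbit never leaves `W`. -/
noncomputable def flowExitTime (φ : M → ℝ → M) (W : Set M) (x : M) : ℝ :=
  sInf {t : ℝ | 0 ≤ t ∧ φ x t ∉ W}

theorem flowExitTime_nonneg : 0 ≤ flowExitTime φ W x :=
  Real.sInf_nonneg fun _ ht => ht.1

theorem flowExitTime_le {t : ℝ} (ht : 0 ≤ t) (hx : φ x t ∉ W) : flowExitTime φ W x ≤ t :=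
  csInf_le ⟨0, fun _ hs => hs.1⟩ ⟨ht, hx⟩

theorem flow_mem_of_lt_flowExitTime {t : ℝ} (ht : 0 ≤ t) (hlt : t < flowExitTime φ W x) :
    φ x t ∈ W :=
  by_contra fun hx => (flowExitTime_le ht hx).not_gt hlt

theorem flowExitTime_eq_zero (hφ0 : φ x 0 = x) (hx : x ∉ W) : flowExitTime φ W x = 0 :=
  (flowExitTime_le le_rfl (by rwa [hφ0])).antisymm flowExitTime_nonneg

variable [TopologicalSpace M]

theorem notMem_of_mem_flowEgress (hW : IsOpen W) (hx : x ∈ flowEgress φ W) : x ∉ W :=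
  (hW.frontier_eq ▸ hx.1).2

theorem flowEgressTime_eq_top (h : ∀ t : ℝ, 0 ≤ t → φ x t ∈ W) : flowEgressTime φ W x = ⊤ :=
  top_unique (le_sSup fun t ht _ => h t ht)

theorem flow_flowExitTime_notMem (hW : IsOpen W) (hφx : Continuous (φ x))
    (hexit : ∃ t, 0 ≤ t ∧ φ x t ∉ W) : φ x (flowExitTime φ W x) ∉ W :=
  ((isClosed_Ici.inter (hW.isClosed_compl.preimage hφx)).csInf_mem hexit
    ⟨0, fun _ hs => hs.1⟩).2

theorem flowExitTime_pos (hW : IsOpen W) (hφx : Continuous (φ x)) (hφ0 : φ x 0 = x)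
    (hx : x ∈ W) (hexit : ∃ t, 0 ≤ t ∧ φ x t ∉ W) : 0 < flowExitTime φ W x :=
  flowExitTime_nonneg.lt_of_ne fun h =>
    flow_flowExitTime_notMem hW hφx hexit (by rwa [← h, hφ0])

theorem flow_flowExitTime_mem_flowEgress (hW : IsOpen W) (hφx : Continuous (φ x))
    (hφ0 : φ x 0 = x) (hφadd : ∀ t s, φ x (t + s) = φ (φ x t) s)
    (hx : x ∈ W ∪ flowEgress φ W) (hexit : ∃ t, 0 ≤ t ∧ φ x t ∉ W) :
    φ x (flowExitTime φ W x) ∈ flowEgress φ W := by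
  rcases hx with hxW | hxE
  · have hT := flowExitTime_pos hW hφx hφ0 hxW hexit
    refine ⟨hW.frontier_eq ▸ ⟨?_, flow_flowExitTime_notMem hW hφx hexit⟩,
      flowExitTime φ W x, hT, fun s hs => ?_⟩
    · refine map_mem_closure (s := Ico 0 _) hφx ?_ fun t ht =>
        flow_mem_of_lt_flowExitTime ht.1 ht.2
      rw [closure_Ico hT.ne]
      exact right_mem_Icc.2 hT.le
    · rw [← hφadd]
      exact flow_mem_of_lt_flowExitTime (by linarith [hs.1]) (by linarith [hs.2])
  · rwa [flowExitTime_eq_zero hφ0 (notMem_of_mem_flowEgress hW hxE), hφ0]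

theorem flowExitTime_lowerSemicontinuousOn (hφ : Continuous (uncurry φ)) (hW : IsOpen W) :
    LowerSemicontinuousOn (flowExitTime φ W) {x | ∃ t, 0 ≤ t ∧ φ x t ∉ W} := by
  intro x _ a ha
  obtain ⟨c, hac, hcT⟩ := exists_between ha
  have hstay : ∀ᶠ x' in 𝓝 x, ∀ t ∈ Icc 0 c, φ x' t ∈ W :=
    isCompact_Icc.eventually_forall_of_forall_eventually fun t ht =>
      hφ.continuousAt.preimage_mem_nhds
        (hW.mem_nhds (flow_mem_of_lt_flowExitTime ht.1 (ht.2.trans_lt hcT)))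
  filter_upwards [nhdsWithin_le_nhds hstay, self_mem_nhdsWithin] with x' hx' hexit
  refine hac.trans_le (le_csInf hexit fun t ht => ?_)
  by_contra! htc
  exact ht.2 (hx' t ⟨ht.1, htc.le⟩)

theorem flowExitTime_upperSemicontinuousAt (hφ : Continuous (uncurry φ))
    (hφadd : ∀ t s, φ x (t + s) = φ (φ x t) s)
    (hx : φ x (flowExitTime φ W x) ∈ flowStrictEgress φ W) :
    UpperSemicontinuousAt (flowExitTime φ W) x := by
  intro b hb
  obtain ⟨-, ε, hε, hout⟩ := hx
  obtain ⟨s, hs, hsmin⟩ := exists_between (lt_min hε (sub_pos.2 hb))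
  have hxs : φ x (flowExitTime φ W x + s) ∉ closure W := by
    rw [closure_eq_self_union_frontier, hφadd]
    exact hout s ⟨hs, hsmin.trans_le (min_le_left _ _)⟩
  have hφs : Continuous fun x' => φ x' (flowExitTime φ W x + s) := hφ.comp (.prodMk_left _)
  filter_upwards
    [hφs.continuousAt.preimage_mem_nhds (isClosed_closure.isOpen_compl.mem_nhds hxs)] with x' hx'
  calc flowExitTime φ W x' ≤ flowExitTime φ W x + s :=
        flowExitTime_le (add_nonneg flowExitTime_nonneg hs.le) fun h => hx' (subset_closure h)
    _ < b := by linarith [min_le_right ε (b - flowExitTime φ W x)]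

theorem continuousOn_flowExitTime (hφ : Continuous (uncurry φ)) (hφ0 : ∀ x, φ x 0 = x)
    (hφadd : ∀ x t s, φ x (t + s) = φ (φ x t) s) (hW : IsOpen W)
    (hWeq : flowEgress φ W = flowStrictEgress φ W) {s : Set M} (hs : s ⊆ W ∪ flowEgress φ W)
    (hexit : ∀ x ∈ s, ∃ t, 0 ≤ t ∧ φ x t ∉ W) : ContinuousOn (flowExitTime φ W) s := fun x hx =>
  continuousWithinAt_iff_lower_upperSemicontinuousWithinAt.2
    ⟨(flowExitTime_lowerSemicontinuousOn hφ hW x (hexit x hx)).mono fun y hy => hexit y hy,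
      (flowExitTime_upperSemicontinuousAt hφ (hφadd x)
        (hWeq ▸ flow_flowExitTime_mem_flowEgress hW (hφ.uncurry_left x) (hφ0 x) (hφadd x)
          (hs hx) (hexit x hx))).upperSemicontinuousWithinAt s⟩

end

theorem wazewski_theorem_for_flows_general
    {M : Type*} [TopologicalSpace M] (φ : M → ℝ → M)
    (hφcont : Continuous fun p : M × ℝ => φ p.1 p.2)
    (hφ0 : ∀ x, φ x 0 = x)
    (hφadd : ∀ x t s, φ x (t + s) = φ (φ x t) s)
    (W : Set M) (hWopen : IsOpen W)
    (hWeq : flowEgress φ W = flowStrictEgress φ W)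
    (Γ : Set M) (hΓ : Γ ⊆ W ∪ flowEgress φ W)
    (hretr : IsRetractOf (Γ ∩ flowEgress φ W) (flowEgress φ W))
    (hnretr : ¬ IsRetractOf (Γ ∩ flowEgress φ W) Γ) :
    ∃ x ∈ Γ, flowEgressTime φ W x = ⊤ ∧ ∀ t : ℝ, 0 ≤ t → φ x t ∈ W := by
  suffices ∃ x ∈ Γ, ∀ t : ℝ, 0 ≤ t → φ x t ∈ W by
    obtain ⟨x, hx, hstay⟩ := this
    exact ⟨x, hx, flowEgressTime_eq_top hstay, hstay⟩
  by_contra! hexit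
  have hexitPoint : Continuous fun x : Γ => φ x (flowExitTime φ W x) :=
    hφcont.comp (continuous_subtype_val.prodMk
      (continuousOn_flowExitTime hφcont hφ0 hφadd hWopen hWeq hΓ hexit).domRestrict)
  refine hnretr (hretr.of_mapsTo _ hexitPoint (fun x => ?_) fun x hx => ?_)
  · exact flow_flowExitTime_mem_flowEgress hWopen (Continuous.uncurry_left (f := φ) _ hφcont)
      (hφ0 x) (hφadd x) (hΓ x.2) (hexit x x.2)
  · simp only [flowExitTime_eq_zero (hφ0 x) (notMem_of_mem_flowEgress hWopen hx.2), hφ0]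

/-- The Ważewski theorem for flows: if `W⁻ = W⁻⁻` and `Γ ⊆ W ∪ W⁻` is such that
`Γ ∩ W⁻` is a retract of `W⁻` but not a retract of `Γ`, then some point of `Γ`
has infinite egress time, i.e. its forward half-trajectory stays in `W` forever. -/
theorem wazewski_theorem_for_flows
    {M : Type*} [TopologicalSpace M] (φ : M → ℝ → M)
    (hφcont : Continuous fun p : M × ℝ => φ p.1 p.2)
    (hφ0 : ∀ x, φ x 0 = x)
    (hφadd : ∀ x t s, φ x (t + s) = φ (φ x t) s)
    (W : Set M) (hWopen : IsOpen W) (hWbd : (frontier W).Nonempty)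
    (hWeq : flowEgress φ W = flowStrictEgress φ W)
    (Γ : Set M) (hΓ : Γ ⊆ W ∪ flowEgress φ W)
    (hretr : IsRetractOf (Γ ∩ flowEgress φ W) (flowEgress φ W))
    (hnretr : ¬ IsRetractOf (Γ ∩ flowEgress φ W) Γ) :
    ∃ x ∈ Γ, flowEgressTime φ W x = ⊤ ∧ ∀ t : ℝ, 0 ≤ t → φ x t ∈ W :=
  wazewski_theorem_for_flows_general φ hφcont hφ0 hφadd W hWopen hWeq Γ hΓ hretr hnretr
end

section
/- Let M be a topological space, φ : M × ℝ → M a flow on M, and W ⊂ M an open set such that every egress point of W is a strict egress point (W⁻ = W⁻⁻). Then the egress-time function σ is continuous on the set {x ∈ W ∪ W⁻ : σ(x) < ∞}; in particular, if every point of a set Γ ⊂ W ∪ W⁻ has finite egress time, then σ : Γ → ℝ is continuous. -/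
/-! The egress time is lower semicontinuous for every open `W`: if the orbit of `x` stays in `W`
over a compact interval `[0, T]`, so do the orbits of all nearby points. It is upper semicontinuous
at `x` as soon as the orbit of `x` lies outside `closure W` at times arbitrarily shortly after
`σ(x)`. For `x ∈ W ∪ W⁻` with `σ(x) < ∞` the point `φ(x, σ(x))` is an egress point, hence a strict
one, and leaving through a strict egress point means exactly that. -/

open scoped ENNReal

open Filter Set Topology

section FlowEgressTime

variable {M : Type*} [TopologicalSpace M] {φ : M → ℝ → M} {W : Set M} {x : M}

lemma map_mem_of_ofReal_lt_flowEgressTime {t : ℝ} (ht : 0 ≤ t)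
    (h : ENNReal.ofReal t < flowEgressTime φ W x) : φ x t ∈ W := by
  obtain ⟨τ, hτ, htτ⟩ := lt_sSup_iff.mp h
  exact hτ t ht htτ

lemma flowEgressTime_le_of_map_notMem {t : ℝ} (ht : 0 ≤ t) (h : φ x t ∉ W) :
    flowEgressTime φ W x ≤ ENNReal.ofReal t :=
  not_lt.mp fun hlt => h (map_mem_of_ofReal_lt_flowEgressTime ht hlt)

lemma map_mem_of_lt_toReal_flowEgressTime (hfin : flowEgressTime φ W x ≠ ⊤) {t : ℝ}
    (ht : 0 ≤ t) (hts : t < (flowEgressTime φ W x).toReal) : φ x t ∈ W :=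
  map_mem_of_ofReal_lt_flowEgressTime ht ((ENNReal.ofReal_lt_iff_lt_toReal ht hfin).mpr hts)

lemma ofReal_le_flowEgressTime {a : ℝ} (h : ∀ t ∈ Ico 0 a, φ x t ∈ W) :
    ENNReal.ofReal a ≤ flowEgressTime φ W x :=
  le_sSup fun t ht hta =>
    h t ⟨ht, (ENNReal.ofReal_lt_ofReal_iff_of_nonneg ht).mp hta⟩

lemma flowEgressTime_eq_zero_of_mem_flowEgress (hφ0 : ∀ x, φ x 0 = x) (hWopen : IsOpen W)
    (hx : x ∈ flowEgress φ W) : flowEgressTime φ W x = 0 := by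
  have hxW : φ x 0 ∉ W := by
    rw [hφ0]
    exact (hWopen.frontier_eq ▸ hx.1).2
  simpa using flowEgressTime_le_of_map_notMem le_rfl hxW

lemma eventually_flowEgressTime_le (hφcont : Continuous fun p : M × ℝ => φ p.1 p.2)
    {T : ℝ} (hT : 0 ≤ T) (h : φ x T ∉ closure W) :
    ∀ᶠ y in 𝓝 x, flowEgressTime φ W y ≤ ENNReal.ofReal T := by
  have hcont : Continuous fun y => φ y T := hφcont.comp (continuous_id.prodMk continuous_const)
  filter_upwards [hcont.continuousAt.preimage_mem_nhds (isClosed_closure.isOpen_compl.mem_nhds h)]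
    with y hy
  exact flowEgressTime_le_of_map_notMem hT fun hyW => hy (subset_closure hyW)

lemma eventually_ofReal_le_flowEgressTime (hφcont : Continuous fun p : M × ℝ => φ p.1 p.2)
    (hWopen : IsOpen W) {T : ℝ} (h : ∀ t ∈ Icc 0 T, φ x t ∈ W) :
    ∀ᶠ y in 𝓝 x, ENNReal.ofReal T ≤ flowEgressTime φ W y := by
  have hnear : ∀ᶠ y in 𝓝 x, ∀ t ∈ Icc 0 T, φ y t ∈ W :=
    isCompact_Icc.eventually_forall_of_forall_eventually fun t ht =>
      hφcont.continuousAt.preimage_mem_nhds (hWopen.mem_nhds (h t ht))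
  filter_upwards [hnear] with y hy
  exact ofReal_le_flowEgressTime fun t ht => hy t (Ico_subset_Icc_self ht)

lemma lowerSemicontinuous_flowEgressTime (hφcont : Continuous fun p : M × ℝ => φ p.1 p.2)
    (hWopen : IsOpen W) : LowerSemicontinuous (flowEgressTime φ W) := by
  intro x a ha
  obtain ⟨r, hr, har, hrx⟩ := ENNReal.lt_iff_exists_real_btwn.mp ha
  have hW : ∀ t ∈ Icc 0 r, φ x t ∈ W := fun t ht =>
    map_mem_of_ofReal_lt_flowEgressTime ht.1 ((ENNReal.ofReal_le_ofReal ht.2).trans_lt hrx)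
  filter_upwards [eventually_ofReal_le_flowEgressTime hφcont hWopen hW] with y hy
  exact har.trans_le hy

lemma upperSemicontinuousAt_flowEgressTime (hφcont : Continuous fun p : M × ℝ => φ p.1 p.2)
    (hexit : ∀ᶠ t in 𝓝[>] (flowEgressTime φ W x).toReal, φ x t ∉ closure W) :
    UpperSemicontinuousAt (flowEgressTime φ W) x := by
  intro b hb
  obtain ⟨r, -, hxr, hrb⟩ := ENNReal.lt_iff_exists_real_btwn.mp hb
  have hsr : (flowEgressTime φ W x).toReal < r := ENNReal.toReal_lt_of_lt_ofReal hxr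
  obtain ⟨T, hTexit, hsT, hTr⟩ := (hexit.and (Ioo_mem_nhdsGT hsr)).exists
  have hT : 0 ≤ T := ENNReal.toReal_nonneg.trans hsT.le
  filter_upwards [eventually_flowEgressTime_le hφcont hT hTexit] with y hy
  exact hy.trans_lt ((ENNReal.ofReal_le_ofReal hTr.le).trans_lt hrb)

lemma map_toReal_flowEgressTime_notMem (hφcont : Continuous fun p : M × ℝ => φ p.1 p.2)
    (hWopen : IsOpen W) (hfin : flowEgressTime φ W x ≠ ⊤) :
    φ x (flowEgressTime φ W x).toReal ∉ W := by
  set s := (flowEgressTime φ W x).toReal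
  intro hs
  have hcont : Continuous fun t => φ x t := hφcont.comp (continuous_const.prodMk continuous_id)
  obtain ⟨δ, hδ, hball⟩ := Metric.mem_nhds_iff.mp (hcont.continuousAt.preimage_mem_nhds
    (hWopen.mem_nhds hs))
  rw [Real.ball_eq_Ioo] at hball
  have hlonger : ENNReal.ofReal (s + δ) ≤ flowEgressTime φ W x := by
    refine ofReal_le_flowEgressTime fun t ht => ?_
    rcases lt_or_ge t s with hts | hst
    · exact map_mem_of_lt_toReal_flowEgressTime hfin ht.1 hts
    · exact hball ⟨by linarith, ht.2⟩
  have := (ENNReal.ofReal_le_iff_le_toReal hfin).mp hlonger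
  linarith

lemma map_toReal_flowEgressTime_mem_flowEgress
    (hφcont : Continuous fun p : M × ℝ => φ p.1 p.2) (hφ0 : ∀ x, φ x 0 = x)
    (hφadd : ∀ x t s, φ x (t + s) = φ (φ x t) s) (hWopen : IsOpen W)
    (hx : x ∈ W) (hfin : flowEgressTime φ W x ≠ ⊤) :
    φ x (flowEgressTime φ W x).toReal ∈ flowEgress φ W := by
  set s := (flowEgressTime φ W x).toReal
  have hnotW := map_toReal_flowEgressTime_notMem hφcont hWopen hfin
  have hs : 0 < s := by
    refine ENNReal.toReal_nonneg.lt_of_ne fun hs0 => hnotW ?_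
    rwa [← hs0, hφ0]
  have hbefore : ∀ t ∈ Ioo 0 s, φ x t ∈ W := fun t ht =>
    map_mem_of_lt_toReal_flowEgressTime hfin ht.1.le ht.2
  have hclosure : φ x s ∈ closure W := by
    have hcont : Continuous fun t => φ x t :=
      hφcont.comp (continuous_const.prodMk continuous_id)
    exact mem_closure_of_tendsto ((hcont.tendsto s).mono_left nhdsWithin_le_nhds)
      (mem_of_superset (Ioo_mem_nhdsLT hs) hbefore)
  refine ⟨hWopen.frontier_eq ▸ ⟨hclosure, hnotW⟩, s, hs, fun t ht => ?_⟩
  rw [← hφadd]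
  exact hbefore (s + t) ⟨by linarith [ht.1], by linarith [ht.2]⟩

lemma eventually_map_notMem_closure_of_map_mem_flowStrictEgress
    (hφadd : ∀ x t s, φ x (t + s) = φ (φ x t) s) {s : ℝ}
    (h : φ x s ∈ flowStrictEgress φ W) : ∀ᶠ t in 𝓝[>] s, φ x t ∉ closure W := by
  obtain ⟨-, ε, hε, hout⟩ := h
  filter_upwards [Ioo_mem_nhdsGT (lt_add_of_pos_right s hε)] with t ht
  have := hout (t - s) ⟨sub_pos.mpr ht.1, by linarith [ht.2]⟩
  rwa [← hφadd, add_sub_cancel, ← closure_eq_self_union_frontier] at this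

lemma continuousAt_flowEgressTime (hφcont : Continuous fun p : M × ℝ => φ p.1 p.2)
    (hφ0 : ∀ x, φ x 0 = x) (hφadd : ∀ x t s, φ x (t + s) = φ (φ x t) s) (hWopen : IsOpen W)
    (hWeq : flowEgress φ W = flowStrictEgress φ W) (hx : x ∈ W ∪ flowEgress φ W)
    (hfin : flowEgressTime φ W x ≠ ⊤) : ContinuousAt (flowEgressTime φ W) x := by
  have hegress : φ x (flowEgressTime φ W x).toReal ∈ flowEgress φ W := by
    rcases hx with hxW | hxE
    · exact map_toReal_flowEgressTime_mem_flowEgress hφcont hφ0 hφadd hWopen hxW hfin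
    · rwa [flowEgressTime_eq_zero_of_mem_flowEgress hφ0 hWopen hxE, ENNReal.toReal_zero, hφ0]
  exact continuousAt_iff_lower_upperSemicontinuousAt.mpr
    ⟨lowerSemicontinuous_flowEgressTime hφcont hWopen x, upperSemicontinuousAt_flowEgressTime
      hφcont (eventually_map_notMem_closure_of_map_mem_flowStrictEgress hφadd (hWeq ▸ hegress))⟩

end FlowEgressTime

/-- If `W⁻ = W⁻⁻`, the egress-time function `σ` is continuous (as a real-valued
function) on the set of points of `W ∪ W⁻` with finite egress time; in particular
it is continuous on any subset `Γ ⊆ W ∪ W⁻` all of whose points have finite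
egress time. -/
theorem egressTime_continuousOn
    {M : Type*} [TopologicalSpace M] (φ : M → ℝ → M)
    (hφcont : Continuous fun p : M × ℝ => φ p.1 p.2)
    (hφ0 : ∀ x, φ x 0 = x)
    (hφadd : ∀ x t s, φ x (t + s) = φ (φ x t) s)
    (W : Set M) (hWopen : IsOpen W)
    (hWeq : flowEgress φ W = flowStrictEgress φ W) :
    ContinuousOn (fun x => (flowEgressTime φ W x).toReal)
      {x | x ∈ W ∪ flowEgress φ W ∧ flowEgressTime φ W x ≠ ⊤} ∧
    ∀ Γ : Set M, Γ ⊆ W ∪ flowEgress φ W → (∀ x ∈ Γ, flowEgressTime φ W x ≠ ⊤) →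
      ContinuousOn (fun x => (flowEgressTime φ W x).toReal) Γ := by
  have hcont : ∀ x ∈ W ∪ flowEgress φ W, flowEgressTime φ W x ≠ ⊤ →
      ContinuousAt (fun x => (flowEgressTime φ W x).toReal) x := fun x hx hfin =>
    (ENNReal.continuousAt_toReal hfin).comp
      (continuousAt_flowEgressTime hφcont hφ0 hφadd hWopen hWeq hx hfin)
  exact ⟨fun x hx => (hcont x hx.1 hx.2).continuousWithinAt,
    fun Γ hΓ hfin x hx => (hcont x (hΓ hx) (hfin x hx)).continuousWithinAt⟩
end

section
/- (Theorem 2.13) Let M be a topological space, Φ a continuous semi-process on M, and W ⊂ M × ℝ an open set with W ∩ {t = 0} ≠ ∅ such that every egress point of W is a strict egress point (W⁻ = W⁻⁻) and the set W₀⁻⁻ of strict egress points at time t = 0 is nonempty. Let x₀ be a uniformly Lyapunov stable equilibrium of Φ and let U ⊂ M be an open set with x₀ ∈ U such that the closure of U times ℝ is contained in W. Suppose there is a continuous path Γ : [0,1] → M × ℝ with Γ(s) ∈ W₀ for all s ∈ (0,1), Γ(0) = (x₀, 0), and Γ(1) ∈ W₀⁻⁻. Then x₀ is not globally attractive for Φ.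 -/
open scoped ENNReal

/-- The egress time of `x` (with initial time `0`) from `W ⊆ M × ℝ` for the
semi-process `Φ` (written `Φ x t₀ t` for `Φ_{t₀,t}(x)`):
`σ(x) = sup {τ ≥ 0 : (Φ_{0,t}(x), t) ∈ W for all t ∈ [0, τ)}`, valued in `ℝ≥0∞`.
For `(x, 0) ∈ ∂W` this supremum equals `0`. -/
noncomputable def spEgressTime {M : Type*}
    (Φ : M → ℝ → ℝ → M) (W : Set (M × ℝ)) (x : M) : ℝ≥0∞ :=
  sSup {τ : ℝ≥0∞ | ∀ t : ℝ, 0 ≤ t → ENNReal.ofReal t < τ → (Φ x 0 t, t) ∈ W}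

/-- Egress points of `W ⊆ M × ℝ` for the semi-process `Φ`: boundary points
`(x₁, t₁)` such that either `t₁ > 0` and `(x₁, t₁) = (Φ_{0,σ(x)}(x), σ(x))` for some
`(x, 0) ∈ W`, or `t₁ = 0` and the forward trajectory of `x₁` leaves `W ∪ ∂W`
immediately. -/
def spEgress {M : Type*} [TopologicalSpace M]
    (Φ : M → ℝ → ℝ → M) (W : Set (M × ℝ)) : Set (M × ℝ) :=
  {p ∈ frontier W |
    (0 < p.2 ∧ ∃ x : M, (x, (0 : ℝ)) ∈ W ∧ spEgressTime Φ W x ≠ ⊤ ∧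
      p.2 = (spEgressTime Φ W x).toReal ∧ p.1 = Φ x 0 (spEgressTime Φ W x).toReal) ∨
    (p.2 = 0 ∧ ∃ ε > (0 : ℝ), ∀ t ∈ Set.Ioo (0 : ℝ) ε, (Φ p.1 0 t, t) ∉ W ∪ frontier W)}

/-- Strict egress points of `W ⊆ M × ℝ` for the semi-process `Φ`: egress points
whose continued trajectory stays outside `W ∪ ∂W` for a positive time interval
(by the semigroup property, `(Φ_{0,σ(x)+t}(x), σ(x)+t) = (Φ_{t₁,t}(x₁), t₁ + t)`). -/
def spStrictEgress {M : Type*} [TopologicalSpace M]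
    (Φ : M → ℝ → ℝ → M) (W : Set (M × ℝ)) : Set (M × ℝ) :=
  {p ∈ spEgress Φ W |
    ∃ ε > (0 : ℝ), ∀ t ∈ Set.Ioo (0 : ℝ) ε, (Φ p.1 p.2 t, p.2 + t) ∉ W ∪ frontier W}

/-- The section `S_τ = {(x, t) ∈ S : t = τ}` of a subset of the extended phase space. -/
def timeSection {M : Type*} (S : Set (M × ℝ)) (τ : ℝ) : Set (M × ℝ) :=
  {p ∈ S | p.2 = τ}

/-!
Split `M` into the points whose trajectory stays in `W` forever and those whose trajectory
eventually leaves `closure W`. The second set is open by continuity of `Φ`. The first is open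
because, by global attraction, such a trajectory enters a neighbourhood `V` of `x₀` that
Lyapunov stability keeps inside `U`, and the finite stretch before that time is controlled by a
tube-lemma argument. Every point `Γ(s)` of the path lies in one of the two sets: if a trajectory
from `W₀` leaves `W`, it does so through an egress point, which is strict, so the trajectory
leaves `closure W`. Since `x₀` lies in the first set and `Γ(1)` in the second, the image of the
path would be disconnected.
-/

open Set Filter Topology

section

variable {M : Type*} (Φ : M → ℝ → ℝ → M) (W : Set (M × ℝ)) {x : M} {t : ℝ}

theorem mem_of_ofReal_lt_spEgressTime (ht : 0 ≤ t)
    (h : ENNReal.ofReal t < spEgressTime Φ W x) : (Φ x 0 t, t) ∈ W := by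
  obtain ⟨τ, hτ, hlt⟩ := lt_sSup_iff.mp h
  exact hτ t ht hlt

theorem spEgressTime_le_ofReal (ht : 0 ≤ t) (h : (Φ x 0 t, t) ∉ W) :
    spEgressTime Φ W x ≤ ENNReal.ofReal t :=
  le_of_not_gt fun hlt => h (mem_of_ofReal_lt_spEgressTime Φ W ht hlt)

theorem ofReal_le_spEgressTime {τ : ℝ} (h : ∀ t, 0 ≤ t → t < τ → (Φ x 0 t, t) ∈ W) :
    ENNReal.ofReal τ ≤ spEgressTime Φ W x :=
  le_sSup fun t ht hlt => h t ht (ENNReal.ofReal_lt_ofReal_iff'.mp hlt).1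

/-- Time is clamped at `0` so that this map is continuous on all of `M × ℝ`. -/
def trajectoryGraph (q : M × ℝ) : M × ℝ :=
  (Φ q.1 0 (max q.2 0), q.2)

theorem trajectoryGraph_of_nonneg (ht : 0 ≤ t) :
    trajectoryGraph Φ (x, t) = (Φ x 0 t, t) := by
  simp only [trajectoryGraph, max_eq_left ht]

end

section

variable {M : Type*} [TopologicalSpace M] {Φ : M → ℝ → ℝ → M} (W : Set (M × ℝ))

theorem continuous_trajectoryGraph
    (hΦcont : ContinuousOn (fun q : M × ℝ × ℝ => Φ q.1 q.2.1 q.2.2) {q | 0 ≤ q.2.2}) :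
    Continuous (trajectoryGraph Φ) :=
  (hΦcont.comp_continuous (continuous_fst.prodMk (continuous_const.prodMk
    (continuous_snd.max continuous_const))) fun q => le_max_right q.2 0).prodMk continuous_snd

theorem isOpen_setOf_exists_notMem_closure
    (hΦcont : ContinuousOn (fun q : M × ℝ × ℝ => Φ q.1 q.2.1 q.2.2) {q | 0 ≤ q.2.2}) :
    IsOpen {x | ∃ t ≥ 0, (Φ x 0 t, t) ∉ closure W} := by
  have : {x | ∃ t ≥ 0, (Φ x 0 t, t) ∉ closure W} =
      ⋃ t ∈ Ici (0 : ℝ), (fun x => trajectoryGraph Φ (x, t)) ⁻¹' (closure W)ᶜ := by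
    ext x
    simp +contextual [trajectoryGraph_of_nonneg]
  rw [this]
  exact isOpen_biUnion fun t _ => isClosed_closure.isOpen_compl.preimage
    ((continuous_trajectoryGraph hΦcont).comp (continuous_id.prodMk continuous_const))

theorem exists_gt_forall_Ico_mem
    (hΦcont : ContinuousOn (fun q : M × ℝ × ℝ => Φ q.1 q.2.1 q.2.2) {q | 0 ≤ q.2.2})
    (hWopen : IsOpen W) {x : M} {t : ℝ} (ht : 0 ≤ t) (h : (Φ x 0 t, t) ∈ W) :
    ∃ u > t, ∀ s ∈ Ico t u, (Φ x 0 s, s) ∈ W := by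
  have hcont : Continuous fun s => trajectoryGraph Φ (x, s) :=
    (continuous_trajectoryGraph hΦcont).comp (continuous_const.prodMk continuous_id)
  have hnhds : (fun s => trajectoryGraph Φ (x, s)) ⁻¹' W ∈ 𝓝 t :=
    hcont.continuousAt.preimage_mem_nhds
      (hWopen.mem_nhds (by rwa [trajectoryGraph_of_nonneg Φ ht]))
  obtain ⟨l, u, ⟨hlt, htu⟩, hsub⟩ := mem_nhds_iff_exists_Ioo_subset.mp hnhds
  refine ⟨u, htu, fun s hs => ?_⟩
  have := hsub ⟨hlt.trans_le hs.1, hs.2⟩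
  rwa [mem_preimage, trajectoryGraph_of_nonneg Φ (ht.trans hs.1)] at this

theorem spEgressTime_pos
    (hΦcont : ContinuousOn (fun q : M × ℝ × ℝ => Φ q.1 q.2.1 q.2.2) {q | 0 ≤ q.2.2})
    (hWopen : IsOpen W) {x : M} (hΦ0 : Φ x 0 0 = x) (hx : (x, 0) ∈ W) :
    0 < spEgressTime Φ W x := by
  obtain ⟨u, hu, hmem⟩ := exists_gt_forall_Ico_mem W hΦcont hWopen le_rfl (by rwa [hΦ0])
  exact (ENNReal.ofReal_pos.mpr hu).trans_le
    (ofReal_le_spEgressTime Φ W fun t ht htu => hmem t ⟨ht, htu⟩)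

theorem notMem_at_spEgressTime
    (hΦcont : ContinuousOn (fun q : M × ℝ × ℝ => Φ q.1 q.2.1 q.2.2) {q | 0 ≤ q.2.2})
    (hWopen : IsOpen W) {x : M} (hσ : spEgressTime Φ W x ≠ ⊤) :
    (Φ x 0 (spEgressTime Φ W x).toReal, (spEgressTime Φ W x).toReal) ∉ W := by
  intro hmem
  obtain ⟨u, hu, hmem'⟩ :=
    exists_gt_forall_Ico_mem W hΦcont hWopen ENNReal.toReal_nonneg hmem
  have hle : ENNReal.ofReal u ≤ spEgressTime Φ W x := ofReal_le_spEgressTime Φ W fun t ht htu => by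
    rcases lt_or_ge t (spEgressTime Φ W x).toReal with htσ | hσt
    · exact mem_of_ofReal_lt_spEgressTime Φ W ht
        ((ENNReal.ofReal_lt_iff_lt_toReal ht hσ).mpr htσ)
    · exact hmem' t ⟨hσt, htu⟩
  exact hu.not_ge ((ENNReal.ofReal_le_iff_le_toReal hσ).mp hle)

theorem mem_closure_at_spEgressTime
    (hΦcont : ContinuousOn (fun q : M × ℝ × ℝ => Φ q.1 q.2.1 q.2.2) {q | 0 ≤ q.2.2})
    {x : M} (hpos : 0 < spEgressTime Φ W x) (hσ : spEgressTime Φ W x ≠ ⊤) :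
    (Φ x 0 (spEgressTime Φ W x).toReal, (spEgressTime Φ W x).toReal) ∈ closure W := by
  set σ := (spEgressTime Φ W x).toReal
  have hσpos : 0 < σ := ENNReal.toReal_pos hpos.ne' hσ
  have htend : Tendsto (fun t => trajectoryGraph Φ (x, t)) (𝓝[<] σ) (𝓝 (Φ x 0 σ, σ)) := by
    rw [← trajectoryGraph_of_nonneg Φ hσpos.le]
    exact ((continuous_trajectoryGraph hΦcont).comp
      (continuous_const.prodMk continuous_id)).continuousAt.tendsto.mono_left nhdsWithin_le_nhds
  refine mem_closure_of_tendsto htend ?_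
  filter_upwards [Ioo_mem_nhdsLT hσpos] with t ht
  rw [trajectoryGraph_of_nonneg Φ ht.1.le]
  exact mem_of_ofReal_lt_spEgressTime Φ W ht.1.le
    ((ENNReal.ofReal_lt_iff_lt_toReal ht.1.le hσ).mpr ht.2)

theorem mem_spEgress_at_spEgressTime
    (hΦcont : ContinuousOn (fun q : M × ℝ × ℝ => Φ q.1 q.2.1 q.2.2) {q | 0 ≤ q.2.2})
    (hWopen : IsOpen W) {x : M} (hΦ0 : Φ x 0 0 = x) (hx : (x, 0) ∈ W)
    (hσ : spEgressTime Φ W x ≠ ⊤) :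
    (Φ x 0 (spEgressTime Φ W x).toReal, (spEgressTime Φ W x).toReal) ∈ spEgress Φ W := by
  have hpos := spEgressTime_pos W hΦcont hWopen hΦ0 hx
  refine ⟨?_, Or.inl ⟨ENNReal.toReal_pos hpos.ne' hσ, x, hx, hσ, rfl, rfl⟩⟩
  rw [hWopen.frontier_eq]
  exact ⟨mem_closure_at_spEgressTime W hΦcont hpos hσ, notMem_at_spEgressTime W hΦcont hWopen hσ⟩

theorem exists_notMem_closure_of_mem_spStrictEgress
    (hΦadd : ∀ (x : M) (t₀ t s : ℝ), 0 ≤ t → 0 ≤ s →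
      Φ x t₀ (t + s) = Φ (Φ x t₀ t) (t₀ + t) s)
    {x : M} {τ : ℝ} (hτ : 0 ≤ τ) (h : (Φ x 0 τ, τ) ∈ spStrictEgress Φ W) :
    ∃ t ≥ 0, (Φ x 0 t, t) ∉ closure W := by
  obtain ⟨-, ε, hε, hout⟩ := h
  refine ⟨τ + ε / 2, by positivity, ?_⟩
  rw [hΦadd x 0 τ (ε / 2) hτ (by positivity), zero_add, closure_eq_self_union_frontier]
  exact hout (ε / 2) ⟨half_pos hε, half_lt_self hε⟩

theorem forall_mem_or_exists_notMem_closure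
    (hΦcont : ContinuousOn (fun q : M × ℝ × ℝ => Φ q.1 q.2.1 q.2.2) {q | 0 ≤ q.2.2})
    (hΦadd : ∀ (x : M) (t₀ t s : ℝ), 0 ≤ t → 0 ≤ s →
      Φ x t₀ (t + s) = Φ (Φ x t₀ t) (t₀ + t) s)
    (hWopen : IsOpen W) (hstrict : spEgress Φ W ⊆ spStrictEgress Φ W)
    {x : M} (hΦ0 : Φ x 0 0 = x) (hx : (x, 0) ∈ W) :
    (∀ t ≥ 0, (Φ x 0 t, t) ∈ W) ∨ ∃ t ≥ 0, (Φ x 0 t, t) ∉ closure W := by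
  refine or_iff_not_imp_left.mpr fun hleave => ?_
  obtain ⟨t, ht, hnot⟩ := not_forall₂.mp hleave
  have hσ : spEgressTime Φ W x ≠ ⊤ :=
    ne_top_of_le_ne_top ENNReal.ofReal_ne_top (spEgressTime_le_ofReal Φ W ht hnot)
  exact exists_notMem_closure_of_mem_spStrictEgress W hΦadd ENNReal.toReal_nonneg
    (hstrict (mem_spEgress_at_spEgressTime W hΦcont hWopen hΦ0 hx hσ))

theorem eventually_nhds_forall_mem
    (hΦcont : ContinuousOn (fun q : M × ℝ × ℝ => Φ q.1 q.2.1 q.2.2) {q | 0 ≤ q.2.2})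
    (hΦadd : ∀ (x : M) (t₀ t s : ℝ), 0 ≤ t → 0 ≤ s →
      Φ x t₀ (t + s) = Φ (Φ x t₀ t) (t₀ + t) s)
    (hWopen : IsOpen W) {V : Set M} (hV : IsOpen V) {T : ℝ} (hT : 0 ≤ T)
    (hVW : ∀ y ∈ V, ∀ t ≥ 0, (Φ y T t, T + t) ∈ W)
    {x : M} (hx : ∀ t ∈ Icc 0 T, (Φ x 0 t, t) ∈ W) (hxV : Φ x 0 T ∈ V) :
    ∀ᶠ y in 𝓝 x, ∀ t ≥ 0, (Φ y 0 t, t) ∈ W := by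
  have hbefore : ∀ᶠ y in 𝓝 x, ∀ t ∈ Icc 0 T, trajectoryGraph Φ (y, t) ∈ W :=
    isCompact_Icc.eventually_forall_of_forall_eventually fun t ht =>
      (continuous_trajectoryGraph hΦcont).continuousAt.preimage_mem_nhds
        (hWopen.mem_nhds (by rw [trajectoryGraph_of_nonneg Φ ht.1]; exact hx t ht))
  have hcont : Continuous fun y => Φ y 0 T :=
    hΦcont.comp_continuous (continuous_id.prodMk (continuous_const (y := ((0 : ℝ), T))))
      fun _ => hT
  filter_upwards [hbefore, hcont.continuousAt.eventually_mem (hV.mem_nhds hxV)]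
    with y hy hyV t ht
  rcases le_or_gt t T with htT | hTt
  · simpa only [trajectoryGraph_of_nonneg Φ ht] using hy t ⟨ht, htT⟩
  · have hsplit : Φ y 0 t = Φ (Φ y 0 T) T (t - T) := by
      simpa using hΦadd y 0 T (t - T) hT (by linarith)
    simpa [hsplit] using hVW _ hyV (t - T) (by linarith)

theorem isOpen_setOf_forall_mem
    (hΦcont : ContinuousOn (fun q : M × ℝ × ℝ => Φ q.1 q.2.1 q.2.2) {q | 0 ≤ q.2.2})
    (hΦadd : ∀ (x : M) (t₀ t s : ℝ), 0 ≤ t → 0 ≤ s →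
      Φ x t₀ (t + s) = Φ (Φ x t₀ t) (t₀ + t) s)
    (hWopen : IsOpen W) {V : Set M} (hV : IsOpen V)
    (hVW : ∀ y ∈ V, ∀ T ≥ 0, ∀ t ≥ 0, (Φ y T t, T + t) ∈ W)
    (hreach : ∀ x, ∀ᶠ t in atTop, Φ x 0 t ∈ V) :
    IsOpen {x | ∀ t ≥ 0, (Φ x 0 t, t) ∈ W} := by
  refine isOpen_iff_eventually.mpr fun x hx => ?_
  obtain ⟨T, hxV, hT⟩ := ((hreach x).and (eventually_ge_atTop 0)).exists
  exact eventually_nhds_forall_mem W hΦcont hΦadd hWopen hV hT (fun y hy => hVW y hy T hT)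
    (fun t ht => hx t ht.1) hxV

end

theorem not_globally_attractive_of_wazewski_general
    {M : Type*} [TopologicalSpace M] (Φ : M → ℝ → ℝ → M)
    (hΦcont : ContinuousOn (fun q : M × ℝ × ℝ => Φ q.1 q.2.1 q.2.2) {q | 0 ≤ q.2.2})
    (hΦ0 : ∀ x t₀, Φ x t₀ 0 = x)
    (hΦadd : ∀ (x : M) (t₀ t s : ℝ), 0 ≤ t → 0 ≤ s →
      Φ x t₀ (t + s) = Φ (Φ x t₀ t) (t₀ + t) s)
    (W : Set (M × ℝ)) (hWopen : IsOpen W)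
    (hWeq : spEgress Φ W = spStrictEgress Φ W)
    (x₀ : M)
    (hequil : ∀ t₀ ≥ (0 : ℝ), ∀ t ≥ (0 : ℝ), Φ x₀ t₀ t = x₀)
    (hstab : ∀ U' : Set M, IsOpen U' → x₀ ∈ U' → ∃ V : Set M, IsOpen V ∧ x₀ ∈ V ∧
      ∀ x ∈ V, ∀ t₀ ≥ (0 : ℝ), ∀ t ≥ (0 : ℝ), Φ x t₀ t ∈ U')
    (U : Set M) (hUopen : IsOpen U) (hx₀U : x₀ ∈ U)
    (hUW : (closure U) ×ˢ (Set.univ : Set ℝ) ⊆ W)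
    (Γ : ℝ → M × ℝ) (hΓcont : ContinuousOn Γ (Set.Icc 0 1))
    (hΓW : ∀ s ∈ Set.Ioo (0 : ℝ) 1, Γ s ∈ timeSection W 0)
    (hΓ0 : Γ 0 = (x₀, 0))
    (hΓ1 : Γ 1 ∈ timeSection (spStrictEgress Φ W) 0) :
    ¬ ∀ x : M, Filter.Tendsto (fun t => Φ x 0 t) Filter.atTop (nhds x₀) := by
  intro hglob
  set A := {x | ∀ t ≥ 0, (Φ x 0 t, t) ∈ W}
  set B := {x | ∃ t ≥ 0, (Φ x 0 t, t) ∉ closure W}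
  have hUW_mem : ∀ y ∈ U, ∀ t, (y, t) ∈ W := fun y hy t => hUW ⟨subset_closure hy, mem_univ t⟩
  obtain ⟨V, hV, hx₀V, hVU⟩ := hstab U hUopen hx₀U
  have hA : IsOpen A := isOpen_setOf_forall_mem W hΦcont hΦadd hWopen hV
    (fun y hy T hT t ht => hUW_mem _ (hVU y hy T hT t ht) _)
    fun x => (hglob x).eventually (hV.mem_nhds hx₀V)
  have hAB : Disjoint A B := disjoint_left.mpr fun x hxA ⟨t, ht, hout⟩ =>
    hout (subset_closure (hxA t ht))
  have hx₀A : x₀ ∈ A := fun t ht => by rw [hequil 0 le_rfl t ht]; exact hUW_mem x₀ hx₀U t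
  have hγ0 : (Γ 0).1 = x₀ := congrArg Prod.fst hΓ0
  have hΓ1B : (Γ 1).1 ∈ B := by
    have hΓ1eq : Γ 1 = (Φ (Γ 1).1 0 0, 0) := by rw [hΦ0]; exact Prod.ext rfl hΓ1.2
    exact exists_notMem_closure_of_mem_spStrictEgress W hΦadd le_rfl (hΓ1eq ▸ hΓ1.1)
  have hcover : (fun s => (Γ s).1) '' Icc 0 1 ⊆ A ∪ B := by
    rintro _ ⟨s, hs, rfl⟩
    rcases eq_or_lt_of_le hs.1 with rfl | hs0
    · exact Or.inl (show (Γ 0).1 ∈ A from hγ0 ▸ hx₀A)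
    rcases eq_or_lt_of_le hs.2 with rfl | hs1
    · exact Or.inr hΓ1B
    obtain ⟨hsW, hs_zero⟩ := hΓW s ⟨hs0, hs1⟩
    exact forall_mem_or_exists_notMem_closure W hΦcont hΦadd hWopen hWeq.le (hΦ0 _ _)
      (by rw [← hs_zero]; exact hsW)
  have hpath : IsPreconnected ((fun s => (Γ s).1) '' Icc 0 1) :=
    isPreconnected_Icc.image _ hΓcont.fst
  have hsubA := hpath.subset_left_of_subset_union hA (isOpen_setOf_exists_notMem_closure W hΦcont)
    hAB hcover ⟨x₀, ⟨0, ⟨le_rfl, zero_le_one⟩, hγ0⟩, hx₀A⟩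
  exact disjoint_left.mp hAB (hsubA ⟨1, ⟨zero_le_one, le_rfl⟩, rfl⟩) hΓ1B

/-- Theorem 2.13: for a continuous semi-process `Φ` on `M` and an open
`W ⊆ M × ℝ` with `W ∩ {t = 0} ≠ ∅`, `W⁻ = W⁻⁻` and `W₀⁻⁻ ≠ ∅`, if `x₀` is a
uniformly Lyapunov stable equilibrium, `U ∋ x₀` is open with `closure U × ℝ ⊆ W`,
and `Γ` is a continuous path in `W₀` from `(x₀, 0)` to a point of `W₀⁻⁻`,
then `x₀` is not globally attractive. -/
theorem not_globally_attractive_of_wazewski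
    {M : Type*} [TopologicalSpace M] (Φ : M → ℝ → ℝ → M)
    (hΦcont : ContinuousOn (fun q : M × ℝ × ℝ => Φ q.1 q.2.1 q.2.2) {q | 0 ≤ q.2.2})
    (hΦ0 : ∀ x t₀, Φ x t₀ 0 = x)
    (hΦadd : ∀ (x : M) (t₀ t s : ℝ), 0 ≤ t → 0 ≤ s →
      Φ x t₀ (t + s) = Φ (Φ x t₀ t) (t₀ + t) s)
    (W : Set (M × ℝ)) (hWopen : IsOpen W)
    (hW0ne : (timeSection W 0).Nonempty)
    (hWeq : spEgress Φ W = spStrictEgress Φ W)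
    (hW0e : (timeSection (spStrictEgress Φ W) 0).Nonempty)
    (x₀ : M)
    (hequil : ∀ t₀ ≥ (0 : ℝ), ∀ t ≥ (0 : ℝ), Φ x₀ t₀ t = x₀)
    (hstab : ∀ U' : Set M, IsOpen U' → x₀ ∈ U' → ∃ V : Set M, IsOpen V ∧ x₀ ∈ V ∧
      ∀ x ∈ V, ∀ t₀ ≥ (0 : ℝ), ∀ t ≥ (0 : ℝ), Φ x t₀ t ∈ U')
    (U : Set M) (hUopen : IsOpen U) (hx₀U : x₀ ∈ U)
    (hUW : (closure U) ×ˢ (Set.univ : Set ℝ) ⊆ W)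
    (Γ : ℝ → M × ℝ) (hΓcont : ContinuousOn Γ (Set.Icc 0 1))
    (hΓW : ∀ s ∈ Set.Ioo (0 : ℝ) 1, Γ s ∈ timeSection W 0)
    (hΓ0 : Γ 0 = (x₀, 0))
    (hΓ1 : Γ 1 ∈ timeSection (spStrictEgress Φ W) 0) :
    ¬ ∀ x : M, Filter.Tendsto (fun t => Φ x 0 t) Filter.atTop (nhds x₀) :=
  not_globally_attractive_of_wazewski_general Φ hΦcont hΦ0 hΦadd W hWopen hWeq x₀ hequil hstab U
    hUopen hx₀U hUW Γ hΓcont hΓW hΓ0 hΓ1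
end

section
/- (Theorem 2.14) Let M = S × N, where S and N are topological spaces, and let Φ be a continuous semi-process on M. Let W ⊂ M × ℝ be an open set with W⁻ = W⁻⁻ and W₀⁻⁻ ≠ ∅. Let {x₀} × N ⊂ M be a uniformly Lyapunov stable invariant manifold of Φ, let U ⊂ S be open with x₀ ∈ U, and suppose closure(U) × N × ℝ ⊂ W. Suppose there is a continuous path Γ : [0,1] → M × ℝ with Γ(s) ∈ W₀ for all s ∈ (0,1), π_M(Γ(0)) ∈ {x₀} × N, and Γ(1) ∈ ∂W ∩ W₀⁻⁻, where π_M : M × ℝ → M is the canonical projection. Then {x₀} × N is not globally attractive for Φ, i.e., there exists a point (x,y) ∈ M such that Φ_{0,t}(x,y) does not converge to the set {x₀} × N as t → ∞. -/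
/-! If every trajectory converged to `{x₀} × N`, a trajectory that never leaves `W` would do so
robustly: at some time `T` it enters `V × N`, where `V` is given by Lyapunov stability for `U`, and
from then on it is trapped in `U × N ⊆ W`; on the compact interval `[0, T]` nearby trajectories
follow it inside the open set `W`. So the initial points with infinite egress time form an open
set. Since `W⁻ = W⁻⁻`, every other trajectory starting in `W` passes strictly outside `closure W`,
which is an open condition as well. The path `Γ` would then split the connected interval `[0, 1]`
into two disjoint nonempty open pieces: `Γ(0)` lies on the invariant manifold inside `U × N`, and
`Γ(1)` is a strict egress point. -/

open scoped ENNReal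

open Set Filter Topology

section EgressTime

variable {M : Type*} {Φ : M → ℝ → ℝ → M} {W : Set (M × ℝ)} {x : M}

theorem ofReal_le_spEgressTime_iff {a : ℝ} :
    ENNReal.ofReal a ≤ spEgressTime Φ W x ↔ ∀ t ∈ Ico 0 a, (Φ x 0 t, t) ∈ W := by
  constructor
  · intro h t ht
    have hlt : ENNReal.ofReal t < spEgressTime Φ W x :=
      ((ENNReal.ofReal_lt_ofReal_iff_of_nonneg ht.1).2 ht.2).trans_le h
    obtain ⟨τ, hτ, htτ⟩ := lt_sSup_iff.1 hlt
    exact hτ t ht.1 htτ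
  · refine fun h => le_sSup fun t ht htlt => h t ⟨ht, ?_⟩
    exact (ENNReal.ofReal_lt_ofReal_iff_of_nonneg ht).1 htlt

theorem spEgressTime_eq_top_iff :
    spEgressTime Φ W x = ⊤ ↔ ∀ t ≥ 0, (Φ x 0 t, t) ∈ W := by
  refine ⟨fun h t ht => ?_, fun h => top_unique (le_sSup fun t ht _ => h t ht)⟩
  have hle : ENNReal.ofReal (t + 1) ≤ spEgressTime Φ W x := h ▸ le_top
  exact ofReal_le_spEgressTime_iff.1 hle t ⟨ht, by linarith⟩

theorem spEgressTime_eq_top_of_mem_trapping {B : Set M}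
    (htrap : ∀ p ∈ B, ∀ t₀ s, 0 ≤ s → (Φ p t₀ s, t₀ + s) ∈ W)
    (hadd : ∀ t s, 0 ≤ t → 0 ≤ s → Φ x 0 (t + s) = Φ (Φ x 0 t) t s) {T : ℝ} (hT : 0 ≤ T)
    (hle : ENNReal.ofReal T ≤ spEgressTime Φ W x) (hB : Φ x 0 T ∈ B) :
    spEgressTime Φ W x = ⊤ := by
  refine spEgressTime_eq_top_iff.2 fun t ht => ?_
  rcases lt_or_ge t T with htT | hTt
  · exact ofReal_le_spEgressTime_iff.1 hle t ⟨ht, htT⟩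
  · have h := htrap _ hB T (t - T) (sub_nonneg.2 hTt)
    rwa [← hadd T (t - T) hT (sub_nonneg.2 hTt), add_sub_cancel] at h

end EgressTime

section Egress

variable {M : Type*} [TopologicalSpace M] {Φ : M → ℝ → ℝ → M} {W : Set (M × ℝ)} {x : M}

variable (Φ W) in
def escapeSet : Set M :=
  {x | ∃ t ≥ 0, (Φ x 0 t, t) ∉ closure W}

theorem disjoint_setOf_spEgressTime_eq_top_escapeSet :
    Disjoint {x | spEgressTime Φ W x = ⊤} (escapeSet Φ W) :=
  disjoint_left.2 fun _ hx ⟨t, ht, hout⟩ =>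
    hout (subset_closure (spEgressTime_eq_top_iff.1 hx t ht))

theorem ofReal_lt_spEgressTime (hW : IsOpen W) (hc : ContinuousOn (Φ x 0) (Ici 0)) {a : ℝ}
    (ha : 0 ≤ a) (hle : ENNReal.ofReal a ≤ spEgressTime Φ W x) (hmem : (Φ x 0 a, a) ∈ W) :
    ENNReal.ofReal a < spEgressTime Φ W x := by
  have hcurve : ContinuousWithinAt (fun t => (Φ x 0 t, t)) (Ici a) a :=
    ((hc a ha).prodMk continuousWithinAt_id).mono (Ici_subset_Ici.2 ha)
  obtain ⟨b, hab, hb⟩ := mem_nhdsGE_iff_exists_Ico_subset.1 (hcurve (hW.mem_nhds hmem))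
  calc ENNReal.ofReal a < ENNReal.ofReal b := (ENNReal.ofReal_lt_ofReal_iff (ha.trans_lt hab)).2 hab
    _ ≤ spEgressTime Φ W x := by
      refine ofReal_le_spEgressTime_iff.2 fun t ht => ?_
      rcases lt_or_ge t a with hta | hat
      · exact ofReal_le_spEgressTime_iff.1 hle t ⟨ht.1, hta⟩
      · exact hb ⟨hat, ht.2⟩

theorem spEgressTime_pos_s5 (hW : IsOpen W) (hc : ContinuousOn (Φ x 0) (Ici 0)) (hx : Φ x 0 0 = x)
    (hxW : (x, 0) ∈ W) : 0 < spEgressTime Φ W x := by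
  simpa using ofReal_lt_spEgressTime hW hc le_rfl (by simp) (hx.symm ▸ hxW)

theorem mem_spEgress_of_spEgressTime_ne_top (hW : IsOpen W) (hc : ContinuousOn (Φ x 0) (Ici 0))
    (hx : Φ x 0 0 = x) (hxW : (x, 0) ∈ W) (hσ : spEgressTime Φ W x ≠ ⊤) :
    (Φ x 0 (spEgressTime Φ W x).toReal, (spEgressTime Φ W x).toReal) ∈ spEgress Φ W := by
  set a := (spEgressTime Φ W x).toReal
  have hσa : ENNReal.ofReal a = spEgressTime Φ W x := ENNReal.ofReal_toReal hσ
  have ha : 0 < a := ENNReal.toReal_pos (spEgressTime_pos_s5 hW hc hx hxW).ne' hσ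
  have hnot : (Φ x 0 a, a) ∉ W := fun h =>
    (ofReal_lt_spEgressTime hW hc ha.le hσa.le h).ne hσa
  have hcl : (Φ x 0 a, a) ∈ closure W := by
    have hcurve : ContinuousWithinAt (fun t => (Φ x 0 t, t)) (Ico 0 a) a :=
      ((hc a ha.le).prodMk continuousWithinAt_id).mono Ico_subset_Ici_self
    refine closure_mono ?_ (hcurve.mem_closure_image (by simp [closure_Ico ha.ne, ha.le]))
    rintro _ ⟨t, ht, rfl⟩
    exact ofReal_le_spEgressTime_iff.1 hσa.le t ht
  exact ⟨⟨hcl, by rwa [hW.interior_eq]⟩, Or.inl ⟨ha, x, hxW, hσ, rfl, rfl⟩⟩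

theorem exists_notMem_closure_of_mem_spStrictEgress_s5 {p : M × ℝ} (hp : p ∈ spStrictEgress Φ W) :
    ∃ s > 0, (Φ p.1 p.2 s, p.2 + s) ∉ closure W := by
  obtain ⟨-, ε, hε, hout⟩ := hp
  refine ⟨ε / 2, by positivity, ?_⟩
  rw [closure_eq_self_union_frontier]
  exact hout (ε / 2) ⟨by positivity, by linarith⟩

theorem mem_escapeSet_of_mem_timeSection_spStrictEgress {p : M × ℝ}
    (hp : p ∈ timeSection (spStrictEgress Φ W) 0) : p.1 ∈ escapeSet Φ W := by
  obtain ⟨s, hs, hout⟩ := exists_notMem_closure_of_mem_spStrictEgress_s5 hp.1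
  rw [hp.2, zero_add] at hout
  exact ⟨s, hs.le, hout⟩

theorem spEgressTime_eq_top_or_mem_escapeSet (hW : IsOpen W)
    (hc : ContinuousOn (Φ x 0) (Ici 0)) (hx : Φ x 0 0 = x)
    (hadd : ∀ t s, 0 ≤ t → 0 ≤ s → Φ x 0 (t + s) = Φ (Φ x 0 t) t s)
    (hstrict : spEgress Φ W ⊆ spStrictEgress Φ W) (hxW : (x, 0) ∈ W) :
    spEgressTime Φ W x = ⊤ ∨ x ∈ escapeSet Φ W := by
  refine or_iff_not_imp_left.2 fun hσ => ?_
  obtain ⟨s, hs, hout⟩ := exists_notMem_closure_of_mem_spStrictEgress_s5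
    (hstrict (mem_spEgress_of_spEgressTime_ne_top hW hc hx hxW hσ))
  refine ⟨(spEgressTime Φ W x).toReal + s, by positivity, ?_⟩
  rwa [hadd _ _ ENNReal.toReal_nonneg hs.le]

theorem isOpen_escapeSet (hΦ : ContinuousOn (fun q : M × ℝ => Φ q.1 0 q.2) {q | 0 ≤ q.2}) :
    IsOpen (escapeSet Φ W) := by
  refine isOpen_iff_mem_nhds.2 fun x ⟨t, ht, hout⟩ => ?_
  have hct : Continuous fun x' => (Φ x' 0 t, t) :=
    (hΦ.comp_continuous (continuous_id.prodMk continuous_const) fun _ => ht).prodMk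
      continuous_const
  filter_upwards [hct.continuousAt.preimage_mem_nhds (isClosed_closure.isOpen_compl.mem_nhds hout)]
    with x' hx' using ⟨t, ht, hx'⟩

theorem isOpen_setOf_spEgressTime_eq_top (hW : IsOpen W)
    (hΦ : ContinuousOn (fun q : M × ℝ => Φ q.1 0 q.2) {q | 0 ≤ q.2})
    (hadd : ∀ x t s, 0 ≤ t → 0 ≤ s → Φ x 0 (t + s) = Φ (Φ x 0 t) t s) {B : Set M}
    (hB : IsOpen B) (htrap : ∀ p ∈ B, ∀ t₀ s, 0 ≤ s → (Φ p t₀ s, t₀ + s) ∈ W)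
    (hreach : ∀ x, ∃ T ≥ 0, Φ x 0 T ∈ B) :
    IsOpen {x | spEgressTime Φ W x = ⊤} := by
  refine isOpen_iff_mem_nhds.2 fun x hx => ?_
  obtain ⟨T, hT, hxB⟩ := hreach x
  have htube : ∀ᶠ x' in 𝓝 x, ∀ t ∈ Icc 0 T, 0 ≤ t → (Φ x' 0 t, t) ∈ W := by
    refine isCompact_Icc.eventually_forall_of_forall_eventually fun t ht => ?_
    have hcurve : ContinuousWithinAt (fun q : M × ℝ => (Φ q.1 0 q.2, q.2)) {q | 0 ≤ q.2} (x, t) :=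
      (hΦ (x, t) ht.1).prodMk continuousWithinAt_snd
    exact eventually_nhdsWithin_iff.1
      (hcurve.preimage_mem_nhdsWithin (hW.mem_nhds (spEgressTime_eq_top_iff.1 hx t ht.1)))
  have hnearB : ∀ᶠ x' in 𝓝 x, Φ x' 0 T ∈ B :=
    ((hΦ.comp_continuous (continuous_id.prodMk continuous_const) fun _ => hT).continuousAt
      (x := x)).preimage_mem_nhds (hB.mem_nhds hxB)
  filter_upwards [htube, hnearB] with x' hx'W hx'B
  refine spEgressTime_eq_top_of_mem_trapping htrap (hadd x') hT ?_ hx'B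
  exact ofReal_le_spEgressTime_iff.2 fun t ht => hx'W t (Ico_subset_Icc_self ht) ht.1

theorem isOpen_setOf_spEgressTime_eq_top_of_forall_tendsto {S N : Type*} [TopologicalSpace S]
    [TopologicalSpace N] {Φ : S × N → ℝ → ℝ → S × N} {W : Set ((S × N) × ℝ)} (hW : IsOpen W)
    (hΦ : ContinuousOn (fun q : (S × N) × ℝ => Φ q.1 0 q.2) {q | 0 ≤ q.2})
    (hadd : ∀ p t s, 0 ≤ t → 0 ≤ s → Φ p 0 (t + s) = Φ (Φ p 0 t) t s) {x₀ : S} {U V : Set S}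
    (hV : IsOpen V) (hx₀V : x₀ ∈ V)
    (hVU : ∀ x ∈ V, ∀ (y : N) (t₀ : ℝ), ∀ t ≥ (0 : ℝ), (Φ (x, y) t₀ t).1 ∈ U)
    (hUW : (U ×ˢ (univ : Set N)) ×ˢ (univ : Set ℝ) ⊆ W)
    (hconv : ∀ p, Tendsto (Φ p 0) atTop (𝓝ˢ (({x₀} : Set S) ×ˢ (univ : Set N)))) :
    IsOpen {p | spEgressTime Φ W p = ⊤} := by
  refine isOpen_setOf_spEgressTime_eq_top hW hΦ hadd (hV.prod isOpen_univ)
    (fun p hp t₀ s hs => hUW ⟨⟨hVU p.1 hp.1 p.2 t₀ s hs, trivial⟩, trivial⟩) fun p => ?_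
  have hVN : V ×ˢ (univ : Set N) ∈ 𝓝ˢ (({x₀} : Set S) ×ˢ (univ : Set N)) :=
    (hV.prod isOpen_univ).mem_nhdsSet.2 (prod_mono (singleton_subset_iff.2 hx₀V) subset_rfl)
  obtain ⟨T, hTV, hT⟩ := (((hconv p).eventually_mem hVN).and (eventually_ge_atTop 0)).exists
  exact ⟨T, hT, hTV⟩

end Egress

theorem invariant_manifold_not_globally_attractive_general
    {S N : Type*} [TopologicalSpace S] [TopologicalSpace N]
    (Φ : S × N → ℝ → ℝ → S × N)
    (hΦcont : ContinuousOn (fun q : (S × N) × ℝ × ℝ => Φ q.1 q.2.1 q.2.2) {q | 0 ≤ q.2.2})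
    (hΦ0 : ∀ p t₀, Φ p t₀ 0 = p)
    (hΦadd : ∀ (p : S × N) (t₀ t s : ℝ), 0 ≤ t → 0 ≤ s →
      Φ p t₀ (t + s) = Φ (Φ p t₀ t) (t₀ + t) s)
    (W : Set ((S × N) × ℝ)) (hWopen : IsOpen W)
    (hWeq : spEgress Φ W = spStrictEgress Φ W)
    (x₀ : S)
    (hinv : ∀ (y : N) (t₀ : ℝ), ∀ t ≥ (0 : ℝ), (Φ (x₀, y) t₀ t).1 = x₀)
    (hstab : ∀ U' : Set S, IsOpen U' → x₀ ∈ U' → ∃ V : Set S, IsOpen V ∧ x₀ ∈ V ∧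
      ∀ x ∈ V, ∀ (y : N) (t₀ : ℝ), ∀ t ≥ (0 : ℝ), (Φ (x, y) t₀ t).1 ∈ U')
    (U : Set S) (hUopen : IsOpen U) (hx₀U : x₀ ∈ U)
    (hUW : ((closure U) ×ˢ (Set.univ : Set N)) ×ˢ (Set.univ : Set ℝ) ⊆ W)
    (Γ : ℝ → (S × N) × ℝ) (hΓcont : ContinuousOn Γ (Set.Icc 0 1))
    (hΓW : ∀ s ∈ Set.Ioo (0 : ℝ) 1, Γ s ∈ timeSection W 0)
    (hΓ0 : (Γ 0).1 ∈ ({x₀} : Set S) ×ˢ (Set.univ : Set N))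
    (hΓ1 : Γ 1 ∈ frontier W ∩ timeSection (spStrictEgress Φ W) 0) :
    ∃ p : S × N, ¬ Filter.Tendsto (fun t => Φ p 0 t) Filter.atTop
      (nhdsSet (({x₀} : Set S) ×ˢ (Set.univ : Set N))) := by
  by_contra! hconv
  have hΦ : ContinuousOn (fun q : (S × N) × ℝ => Φ q.1 0 q.2) {q | 0 ≤ q.2} :=
    hΦcont.comp (by fun_prop : Continuous fun q : (S × N) × ℝ => (q.1, (0 : ℝ), q.2)).continuousOn
      fun _ hq => hq
  have hcurve (p : S × N) : ContinuousOn (Φ p 0) (Ici 0) :=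
    hΦ.comp (by fun_prop : Continuous fun t : ℝ => (p, t)).continuousOn fun _ ht => ht
  have hadd (p : S × N) (t s : ℝ) (ht : 0 ≤ t) (hs : 0 ≤ s) :
      Φ p 0 (t + s) = Φ (Φ p 0 t) t s := by
    simpa using hΦadd p 0 t s ht hs
  obtain ⟨V, hVopen, hx₀V, hV⟩ := hstab U hUopen hx₀U
  have hstay_open : IsOpen {p | spEgressTime Φ W p = ⊤} :=
    isOpen_setOf_spEgressTime_eq_top_of_forall_tendsto hWopen hΦ hadd hVopen hx₀V hV
      ((prod_mono (prod_mono subset_closure subset_rfl) subset_rfl).trans hUW) hconv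
  have hΓ0_stay : spEgressTime Φ W (Γ 0).1 = ⊤ := by
    refine spEgressTime_eq_top_iff.2 fun t ht => hUW ⟨⟨subset_closure ?_, trivial⟩, trivial⟩
    rw [show (Γ 0).1 = (x₀, (Γ 0).1.2) from Prod.ext hΓ0.1 rfl, hinv _ 0 t ht]
    exact hx₀U
  have hΓ1_escape : (Γ 1).1 ∈ escapeSet Φ W :=
    mem_escapeSet_of_mem_timeSection_spStrictEgress hΓ1.2
  have hcover :
      (fun s => (Γ s).1) '' Icc 0 1 ⊆ {p | spEgressTime Φ W p = ⊤} ∪ escapeSet Φ W := by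
    rintro _ ⟨s, hs, rfl⟩
    rcases hs.1.eq_or_lt with rfl | hs0
    · exact Or.inl hΓ0_stay
    rcases hs.2.eq_or_lt with rfl | hs1
    · exact Or.inr hΓ1_escape
    obtain ⟨hW, ht⟩ := hΓW s ⟨hs0, hs1⟩
    exact spEgressTime_eq_top_or_mem_escapeSet hWopen (hcurve _) (hΦ0 _ 0) (hadd _) hWeq.subset
      (by rwa [← ht])
  have hstay := (isPreconnected_Icc.image _
    (continuous_fst.comp_continuousOn hΓcont)).subset_left_of_subset_union hstay_open
    (isOpen_escapeSet hΦ) disjoint_setOf_spEgressTime_eq_top_escapeSet hcover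
    ⟨_, mem_image_of_mem _ (left_mem_Icc.2 zero_le_one), hΓ0_stay⟩
  exact disjoint_setOf_spEgressTime_eq_top_escapeSet.notMem_of_mem_left
    (hstay (mem_image_of_mem _ (right_mem_Icc.2 zero_le_one))) hΓ1_escape

/-- Theorem 2.14: for a continuous semi-process `Φ` on `M = S × N` and an open
`W ⊆ M × ℝ` with `W⁻ = W⁻⁻` and `W₀⁻⁻ ≠ ∅`, if `{x₀} × N` is a uniformly Lyapunov
stable invariant manifold, `U ⊆ S` is open with `x₀ ∈ U` and
`closure U × N × ℝ ⊆ W`, and `Γ` is a continuous path with `Γ(s) ∈ W₀` for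
`s ∈ (0,1)`, `π_M(Γ(0)) ∈ {x₀} × N` and `Γ(1) ∈ ∂W ∩ W₀⁻⁻`, then `{x₀} × N` is
not globally attractive: some trajectory does not converge to the set `{x₀} × N`. -/
theorem invariant_manifold_not_globally_attractive
    {S N : Type*} [TopologicalSpace S] [TopologicalSpace N]
    (Φ : S × N → ℝ → ℝ → S × N)
    (hΦcont : ContinuousOn (fun q : (S × N) × ℝ × ℝ => Φ q.1 q.2.1 q.2.2) {q | 0 ≤ q.2.2})
    (hΦ0 : ∀ p t₀, Φ p t₀ 0 = p)
    (hΦadd : ∀ (p : S × N) (t₀ t s : ℝ), 0 ≤ t → 0 ≤ s →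
      Φ p t₀ (t + s) = Φ (Φ p t₀ t) (t₀ + t) s)
    (W : Set ((S × N) × ℝ)) (hWopen : IsOpen W)
    (hWeq : spEgress Φ W = spStrictEgress Φ W)
    (hW0e : (timeSection (spStrictEgress Φ W) 0).Nonempty)
    (x₀ : S)
    (hinv : ∀ (y : N) (t₀ : ℝ), ∀ t ≥ (0 : ℝ), (Φ (x₀, y) t₀ t).1 = x₀)
    (hstab : ∀ U' : Set S, IsOpen U' → x₀ ∈ U' → ∃ V : Set S, IsOpen V ∧ x₀ ∈ V ∧
      ∀ x ∈ V, ∀ (y : N) (t₀ : ℝ), ∀ t ≥ (0 : ℝ), (Φ (x, y) t₀ t).1 ∈ U')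
    (U : Set S) (hUopen : IsOpen U) (hx₀U : x₀ ∈ U)
    (hUW : ((closure U) ×ˢ (Set.univ : Set N)) ×ˢ (Set.univ : Set ℝ) ⊆ W)
    (Γ : ℝ → (S × N) × ℝ) (hΓcont : ContinuousOn Γ (Set.Icc 0 1))
    (hΓW : ∀ s ∈ Set.Ioo (0 : ℝ) 1, Γ s ∈ timeSection W 0)
    (hΓ0 : (Γ 0).1 ∈ ({x₀} : Set S) ×ˢ (Set.univ : Set N))
    (hΓ1 : Γ 1 ∈ frontier W ∩ timeSection (spStrictEgress Φ W) 0) :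
    ∃ p : S × N, ¬ Filter.Tendsto (fun t => Φ p 0 t) Filter.atTop
      (nhdsSet (({x₀} : Set S) ×ˢ (Set.univ : Set N))) :=
  invariant_manifold_not_globally_attractive_general Φ hΦcont hΦ0 hΦadd W hWopen hWeq x₀ hinv hstab
    U hUopen hx₀U hUW Γ hΓcont hΓW hΓ0 hΓ1
end

section
/- Let M be a topological space, Φ a continuous semi-process on M, W ⊂ M × ℝ an open set, x₀ a uniformly Lyapunov stable equilibrium of Φ, and U ⊂ M an open set with x₀ ∈ U and closure(U) × ℝ ⊂ W. Let V ∋ x₀ be an open set witnessing uniform stability for U (i.e., Φ_{t₀,t}(z) ∈ U for all z ∈ V, t₀ ≥ 0, t ≥ 0). If for some x ∈ M with (x,0) ∈ W and some τ ≥ 0 one has Φ_{0,τ}(x) ∈ V and the half-trajectory of x stays in W up to time τ, then σ(x) = ∞, i.e., the half-trajectory of x never leaves W. Consequently, the set of points x with (x,0) ∈ W whose half-trajectory enters V at some finite time while remaining in W is an open subset of {x : (x,0) ∈ W} on which σ ≡ ∞. -/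
/-!
Once the trajectory enters `V` at time `τ`, the semigroup property writes its later part as a
trajectory started in `V`, which uniform stability keeps in `U`; since `closure U × ℝ ⊆ W`, the
trajectory never leaves `W`. For openness, both conditions "`Φ_{0,τ}(y) ∈ V`" and "the trajectory
of `y` stays in `W` on the compact interval `[0, τ]`" are open in `y`, the latter by the tube lemma.
-/

open scoped ENNReal

open Set

theorem isOpen_setOf_forall_mem_of_isCompact {X Y : Type*} [TopologicalSpace X]
    [TopologicalSpace Y] {Z : Set (X × Y)} (hZ : IsOpen Z) {K : Set Y} (hK : IsCompact K) :
    IsOpen {x | ∀ y ∈ K, (x, y) ∈ Z} :=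
  isOpen_iff_mem_nhds.2 fun _ hx =>
    hK.eventually_forall_of_forall_eventually fun y hy => hZ.mem_nhds (hx y hy)

section SemiProcess

variable {M : Type*} {Φ : M → ℝ → ℝ → M} {W : Set (M × ℝ)} {U V : Set M} {x : M} {τ : ℝ}

theorem spEgressTime_eq_top_of_forall_mem (h : ∀ t : ℝ, 0 ≤ t → (Φ x 0 t, t) ∈ W) :
    spEgressTime Φ W x = ⊤ :=
  eq_top_iff.2 <| le_sSup fun t ht _ => h t ht

theorem mem_of_enters_trapping
    (hΦadd : ∀ (x : M) (t₀ t s : ℝ), 0 ≤ t → 0 ≤ s →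
      Φ x t₀ (t + s) = Φ (Φ x t₀ t) (t₀ + t) s)
    (hV : ∀ z ∈ V, ∀ t₀ ≥ (0 : ℝ), ∀ t ≥ (0 : ℝ), Φ z t₀ t ∈ U)
    (hτ : 0 ≤ τ) (hτV : Φ x 0 τ ∈ V) {t : ℝ} (ht : τ ≤ t) : Φ x 0 t ∈ U := by
  have hsplit := hΦadd x 0 τ (t - τ) hτ (sub_nonneg.2 ht)
  rw [add_sub_cancel, zero_add] at hsplit
  rw [hsplit]
  exact hV _ hτV τ hτ _ (sub_nonneg.2 ht)

theorem forall_mem_of_enters_trapping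
    (hΦadd : ∀ (x : M) (t₀ t s : ℝ), 0 ≤ t → 0 ≤ s →
      Φ x t₀ (t + s) = Φ (Φ x t₀ t) (t₀ + t) s)
    (hV : ∀ z ∈ V, ∀ t₀ ≥ (0 : ℝ), ∀ t ≥ (0 : ℝ), Φ z t₀ t ∈ U)
    (hUW : U ×ˢ (univ : Set ℝ) ⊆ W) (hτ : 0 ≤ τ) (hτV : Φ x 0 τ ∈ V)
    (htraj : ∀ t : ℝ, 0 ≤ t → t < τ → (Φ x 0 t, t) ∈ W) :
    ∀ t : ℝ, 0 ≤ t → (Φ x 0 t, t) ∈ W := by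
  intro t ht
  rcases lt_or_ge t τ with hlt | hge
  · exact htraj t ht hlt
  · exact hUW ⟨mem_of_enters_trapping hΦadd hV hτ hτV hge, trivial⟩

variable [TopologicalSpace M]
  (hΦcont : ContinuousOn (fun q : M × ℝ × ℝ => Φ q.1 q.2.1 q.2.2) {q | 0 ≤ q.2.2})
include hΦcont

theorem continuous_semiprocess_apply (hτ : 0 ≤ τ) : Continuous fun y => Φ y 0 τ :=
  hΦcont.comp_continuous (f := fun y : M => (y, (0 : ℝ), τ)) (by fun_prop) fun _ => hτ

theorem isOpen_setOf_forall_Icc_mem (hW : IsOpen W) (τ : ℝ) :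
    IsOpen {y | ∀ t ∈ Icc 0 τ, (Φ y 0 t, t) ∈ W} := by
  -- Clamping the time at `0` extends the trajectory map continuously to all of `M × ℝ`.
  have hclamp : Continuous fun p : M × ℝ => Φ p.1 0 (max p.2 0) :=
    hΦcont.comp_continuous (f := fun p : M × ℝ => (p.1, (0 : ℝ), max p.2 0)) (by fun_prop)
      fun p => le_max_right p.2 0
  convert isOpen_setOf_forall_mem_of_isCompact
    (hW.preimage (hclamp.prodMk continuous_snd)) (isCompact_Icc (a := 0) (b := τ)) using 1
  ext y
  refine forall₂_congr fun t ht => ?_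
  simp only [mem_preimage, max_eq_left ht.1]

end SemiProcess

theorem egressTime_eq_top_of_enters_stability_nbhd_general
    {M : Type*} [TopologicalSpace M] (Φ : M → ℝ → ℝ → M)
    (hΦcont : ContinuousOn (fun q : M × ℝ × ℝ => Φ q.1 q.2.1 q.2.2) {q | 0 ≤ q.2.2})
    (hΦadd : ∀ (x : M) (t₀ t s : ℝ), 0 ≤ t → 0 ≤ s →
      Φ x t₀ (t + s) = Φ (Φ x t₀ t) (t₀ + t) s)
    (W : Set (M × ℝ)) (hWopen : IsOpen W)
    (U : Set M)
    (hUW : (closure U) ×ˢ (Set.univ : Set ℝ) ⊆ W)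
    (V : Set M) (hVopen : IsOpen V)
    (hV : ∀ z ∈ V, ∀ t₀ ≥ (0 : ℝ), ∀ t ≥ (0 : ℝ), Φ z t₀ t ∈ U) :
    (∀ x : M, (x, (0 : ℝ)) ∈ W → ∀ τ ≥ (0 : ℝ), Φ x 0 τ ∈ V →
      (∀ t : ℝ, 0 ≤ t → t < τ → (Φ x 0 t, t) ∈ W) → spEgressTime Φ W x = ⊤) ∧
    (∀ x : M,
      ((x, (0 : ℝ)) ∈ W ∧ ∃ τ ≥ (0 : ℝ), Φ x 0 τ ∈ V ∧
        ∀ t : ℝ, 0 ≤ t → t < τ → (Φ x 0 t, t) ∈ W) →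
      spEgressTime Φ W x = ⊤ ∧
      ∃ O : Set M, IsOpen O ∧ x ∈ O ∧
        ∀ y ∈ O, (y, (0 : ℝ)) ∈ W →
          ((y, (0 : ℝ)) ∈ W ∧ ∃ τ ≥ (0 : ℝ), Φ y 0 τ ∈ V ∧
            ∀ t : ℝ, 0 ≤ t → t < τ → (Φ y 0 t, t) ∈ W)) := by
  have hUW' : U ×ˢ (univ : Set ℝ) ⊆ W := (prod_mono subset_closure subset_rfl).trans hUW
  have key : ∀ x : M, (x, (0 : ℝ)) ∈ W → ∀ τ ≥ (0 : ℝ), Φ x 0 τ ∈ V →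
      (∀ t : ℝ, 0 ≤ t → t < τ → (Φ x 0 t, t) ∈ W) → spEgressTime Φ W x = ⊤ :=
    fun _ _ _ hτ hτV htraj => spEgressTime_eq_top_of_forall_mem
      (forall_mem_of_enters_trapping hΦadd hV hUW' hτ hτV htraj)
  refine ⟨key, ?_⟩
  rintro x ⟨hxW, τ, hτ, hτV, htraj⟩
  have hx := forall_mem_of_enters_trapping hΦadd hV hUW' hτ hτV htraj
  refine ⟨key x hxW τ hτ hτV htraj, {y | Φ y 0 τ ∈ V} ∩ {y | ∀ t ∈ Icc 0 τ, (Φ y 0 t, t) ∈ W},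
    (hVopen.preimage (continuous_semiprocess_apply hΦcont hτ)).inter
      (isOpen_setOf_forall_Icc_mem hΦcont hWopen τ),
    ⟨hτV, fun t ht => hx t ht.1⟩, ?_⟩
  rintro y ⟨hyV, hyW⟩ hy0
  exact ⟨hy0, τ, hτ, hyV, fun t ht htτ => hyW t ⟨ht, htτ.le⟩⟩

/-- If the half-trajectory of `x` stays in `W` up to a time `τ` at which it enters
the stability neighborhood `V` of the uniformly stable equilibrium `x₀` (where `V`
witnesses uniform stability for an open `U ∋ x₀` with `closure U × ℝ ⊆ W`), then
the half-trajectory never leaves `W`, i.e. `σ(x) = ∞`. Consequently, the set of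
initial points in `W` whose half-trajectory enters `V` at some finite time while
remaining in `W` is open in `{x : (x,0) ∈ W}` and `σ ≡ ∞` on it. -/
theorem egressTime_eq_top_of_enters_stability_nbhd
    {M : Type*} [TopologicalSpace M] (Φ : M → ℝ → ℝ → M)
    (hΦcont : ContinuousOn (fun q : M × ℝ × ℝ => Φ q.1 q.2.1 q.2.2) {q | 0 ≤ q.2.2})
    (hΦ0 : ∀ x t₀, Φ x t₀ 0 = x)
    (hΦadd : ∀ (x : M) (t₀ t s : ℝ), 0 ≤ t → 0 ≤ s →
      Φ x t₀ (t + s) = Φ (Φ x t₀ t) (t₀ + t) s)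
    (W : Set (M × ℝ)) (hWopen : IsOpen W)
    (x₀ : M)
    (hequil : ∀ t₀ ≥ (0 : ℝ), ∀ t ≥ (0 : ℝ), Φ x₀ t₀ t = x₀)
    (hstab : ∀ U' : Set M, IsOpen U' → x₀ ∈ U' → ∃ V' : Set M, IsOpen V' ∧ x₀ ∈ V' ∧
      ∀ x ∈ V', ∀ t₀ ≥ (0 : ℝ), ∀ t ≥ (0 : ℝ), Φ x t₀ t ∈ U')
    (U : Set M) (hUopen : IsOpen U) (hx₀U : x₀ ∈ U)
    (hUW : (closure U) ×ˢ (Set.univ : Set ℝ) ⊆ W)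
    (V : Set M) (hVopen : IsOpen V) (hx₀V : x₀ ∈ V)
    (hV : ∀ z ∈ V, ∀ t₀ ≥ (0 : ℝ), ∀ t ≥ (0 : ℝ), Φ z t₀ t ∈ U) :
    (∀ x : M, (x, (0 : ℝ)) ∈ W → ∀ τ ≥ (0 : ℝ), Φ x 0 τ ∈ V →
      (∀ t : ℝ, 0 ≤ t → t < τ → (Φ x 0 t, t) ∈ W) → spEgressTime Φ W x = ⊤) ∧
    (∀ x : M,
      ((x, (0 : ℝ)) ∈ W ∧ ∃ τ ≥ (0 : ℝ), Φ x 0 τ ∈ V ∧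
        ∀ t : ℝ, 0 ≤ t → t < τ → (Φ x 0 t, t) ∈ W) →
      spEgressTime Φ W x = ⊤ ∧
      ∃ O : Set M, IsOpen O ∧ x ∈ O ∧
        ∀ y ∈ O, (y, (0 : ℝ)) ∈ W →
          ((y, (0 : ℝ)) ∈ W ∧ ∃ τ ≥ (0 : ℝ), Φ y 0 τ ∈ V ∧
            ∀ t : ℝ, 0 ≤ t → t < τ → (Φ y 0 t, t) ∈ W)) :=
  egressTime_eq_top_of_enters_stability_nbhd_general Φ hΦcont hΦadd W hWopen U hUW V hVopen hV
end

section
/- Fix x₀ ∈ ℝ. Every differentiable function y : ℝ → ℝ satisfying y'(t) = cos(y(t)) + (x₀ + t)·sin(y(t)) for all t ≥ 0 and y(0) ∈ [0, π] satisfies y(t) ∈ [0, π] for all t ≥ 0. (This is the case a = 1 of the system ẋ = 1, ẏ = a·cos y + x·sin y: the strip 0 ≤ y ≤ π is forward invariant since ẏ > 0 on y = 0 and ẏ < 0 on y = π.) -/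
/-- Barrier lemma: if a differentiable function has strictly positive derivative
whenever it vanishes (at nonnegative times), and starts nonnegative, it stays
nonnegative for all `t ≥ 0`. -/
lemma aux_nonneg (y : ℝ → ℝ) (hdiff : Differentiable ℝ y)
    (hpos : ∀ s ≥ (0 : ℝ), y s = 0 → 0 < deriv y s)
    (h0 : 0 ≤ y 0) : ∀ t ≥ (0 : ℝ), 0 ≤ y t := by
  intro t₁ ht₁
  by_contra hcon
  push_neg at hcon
  set S : Set ℝ := Set.Icc 0 t₁ ∩ {t | 0 ≤ y t} with hS
  have hSne : S.Nonempty := ⟨0, ⟨le_refl 0, ht₁⟩, h0⟩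
  have hScomp : IsCompact S :=
    isCompact_Icc.inter_right (isClosed_le continuous_const hdiff.continuous)
  set s := sSup S with hs_def
  have hsS : s ∈ S := hScomp.sSup_mem hSne
  have hs0 : 0 ≤ s := hsS.1.1
  have hst₁ : s ≤ t₁ := hsS.1.2
  have hslt : s < t₁ := by
    rcases lt_or_eq_of_le hst₁ with h | h
    · exact h
    · exact absurd (h ▸ hsS.2) (not_le.mpr hcon)
  have hneg : ∀ u ∈ Set.Ioc s t₁, y u < 0 := by
    intro u hu
    by_contra hge
    push_neg at hge
    have huS : u ∈ S := ⟨⟨hs0.trans hu.1.le, hu.2⟩, hge⟩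
    exact absurd (le_csSup hScomp.bddAbove huS) (not_le.mpr hu.1)
  -- y s = 0
  have hys_le : y s ≤ 0 := by
    have htend : Filter.Tendsto y (nhdsWithin s (Set.Ioi s)) (nhds (y s)) :=
      (hdiff.continuous.continuousAt).continuousWithinAt.tendsto
    refine le_of_tendsto htend ?_
    filter_upwards [Ioc_mem_nhdsGT_of_mem ⟨le_refl s, hslt⟩] with u hu
    exact (hneg u hu).le
  have hys : y s = 0 := le_antisymm hys_le hsS.2
  have hd : 0 < deriv y s := hpos s hs0 hys
  -- slope from the right is ≤ 0
  have hslope : Filter.Tendsto (slope y s) (nhdsWithin s (Set.Ioi s)) (nhds (deriv y s)) := by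
    have := hasDerivAt_iff_tendsto_slope.mp (hdiff s).hasDerivAt
    exact this.mono_left (nhdsWithin_mono s (fun x hx => ne_of_gt hx))
  have hle : deriv y s ≤ 0 := by
    refine le_of_tendsto hslope ?_
    filter_upwards [Ioc_mem_nhdsGT_of_mem ⟨le_refl s, hslt⟩] with u hu
    have h1 : y u - y s < 0 := by rw [hys]; simpa using hneg u hu
    have h2 : 0 < u - s := sub_pos.mpr hu.1
    rw [slope_def_field]
    exact div_nonpos_iff.mpr (Or.inr ⟨h1.le, h2.le⟩)
  exact absurd hd (not_lt.mpr hle)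

/-- Forward invariance of the strip `0 ≤ y ≤ π` for the scalar non-autonomous ODE
`y' = cos y + (x₀ + t)·sin y` (the case `a = 1` of `ẋ = 1`, `ẏ = a cos y + x sin y`):
every differentiable solution starting in `[0, π]` stays in `[0, π]` for all `t ≥ 0`. -/
theorem strip_forward_invariant (x₀ : ℝ) (y : ℝ → ℝ)
    (hdiff : Differentiable ℝ y)
    (hode : ∀ t ≥ (0 : ℝ), deriv y t = Real.cos (y t) + (x₀ + t) * Real.sin (y t))
    (h0 : y 0 ∈ Set.Icc 0 Real.pi) :
    ∀ t ≥ (0 : ℝ), y t ∈ Set.Icc 0 Real.pi := by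
  intro t ht
  constructor
  · exact aux_nonneg y hdiff
      (fun s hs hys => by rw [hode s hs, hys]; simp) h0.1 t ht
  · have := aux_nonneg (fun u => Real.pi - y u)
      (Differentiable.const_sub hdiff _)
      (fun s hs hys => by
        have hy : y s = Real.pi := by linarith [(hys : Real.pi - y s = 0)]
        have hder : deriv (fun u => Real.pi - y u) s = -deriv y s := by
          simp [deriv_const_sub]
        rw [hder, hode s hs, hy]
        simp) (by show 0 ≤ Real.pi - y 0; linarith [h0.2]) t ht
    linarith [(this : 0 ≤ Real.pi - y t)]
end

section
/- There exists a differentiable function y : ℝ → ℝ satisfying y'(t) = −cos(y(t)) + t·sin(y(t)) for all t ≥ 0 such that y(t) ∈ (0, π) for all t ≥ 0. (This is the case a = −1 of the system ẋ = 1, ẏ = a·cos y + x·sin y: although on the boundary of the strip 0 ≤ y ≤ π the vector field points strictly outward — ẏ < 0 on y = 0 and ẏ > 0 on y = π — the Ważewski method yields a solution that never leaves the strip.) -/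
/-!
The solutions `y_c` with `y_c 0 = c` are global, since the field is Lipschitz in `y` with
constant `1 + |t|`, and by Grönwall `y_c t` depends continuously on `c`. On the lines `y = 0` and
`y = π` the field equals `-1` and `1`, so a solution that leaves the strip through one side never
comes back, and the initial values whose solution leaves through the bottom, resp. the top, form
disjoint open sets containing `0`, resp. `π`. They cannot cover the connected interval `[0, π]`:
some `c` in between gives a solution staying in the closed strip, hence in the open one, since
touching the boundary would push it out.
-/

open Real Set Filter Topology
open scoped NNReal

section Sign

variable {g : ℝ → ℝ} {d t : ℝ}

theorem HasDerivAt.eventually_nhdsGT_lt (h : HasDerivAt g d t) (hd : d < 0) :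
    ∀ᶠ s in 𝓝[>] t, g s < g t := by
  filter_upwards [h.hasDerivWithinAt.limsup_slope_le' (lt_irrefl t) hd, self_mem_nhdsWithin]
    with s hslope hs
  rw [slope_def_field, div_lt_iff₀ (sub_pos.2 hs), zero_mul, sub_neg] at hslope
  exact hslope

theorem HasDerivAt.eventually_nhdsLT_gt (h : HasDerivAt g d t) (hd : d < 0) :
    ∀ᶠ s in 𝓝[<] t, g t < g s := by
  filter_upwards [h.hasDerivWithinAt.limsup_slope_le' (lt_irrefl t) hd, self_mem_nhdsWithin]
    with s hslope hs
  rw [slope_def_field, div_lt_iff_of_neg (sub_neg.2 hs), zero_mul, sub_pos] at hslope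
  exact hslope

theorem image_lt_of_deriv_neg_boundary {g' : ℝ → ℝ} {b t₁ t₂ : ℝ} (hg : ∀ t, HasDerivAt g (g' t) t)
    (bound : ∀ t, g t = b → g' t < 0) (h₁ : g t₁ < b) (ht : t₁ ≤ t₂) : g t₂ < b := by
  have hle : ∀ t ∈ Icc t₁ t₂, g t ≤ b :=
    image_le_of_deriv_right_lt_deriv_boundary
      (HasDerivAt.continuousOn fun t _ => hg t) (fun t _ => (hg t).hasDerivWithinAt) h₁.le
      (fun _ => hasDerivAt_const _ b) (fun t _ h => bound t h)
  refine (hle t₂ ⟨ht, le_rfl⟩).lt_of_ne fun h => ?_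
  have ht₁₂ : t₁ < t₂ := ht.lt_of_ne (by rintro rfl; exact h₁.ne h)
  obtain ⟨s, hs, hst⟩ :=
    (((hg t₂).eventually_nhdsLT_gt (bound t₂ h)).and (Ioo_mem_nhdsLT ht₁₂)).exists
  exact (hle s ⟨hst.1.le, hst.2.le⟩).not_gt (h ▸ hs)

end Sign

theorem exists_forall_mem_Icc_of_isPreconnected {X : Type*} [TopologicalSpace X] {S : Set X}
    (hS : IsPreconnected S) {Y : X → ℝ → ℝ} (hY : ∀ t ≥ 0, Continuous fun c => Y c t)
    {α β : ℝ} {a b : X} (ha : a ∈ S) (hb : b ∈ S) (ha' : ∃ t ≥ 0, Y a t < α)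
    (hb' : ∃ t ≥ 0, β < Y b t) (hexit : ∀ c, ∀ t₁ ≥ 0, Y c t₁ < α → ∀ t₂ ≥ 0, Y c t₂ ≤ β) :
    ∃ c ∈ S, ∀ t ≥ 0, Y c t ∈ Icc α β := by
  set A := {c | ∃ t ≥ 0, Y c t < α}
  set B := {c | ∃ t ≥ 0, β < Y c t}
  have hA : IsOpen A := isOpen_iff_mem_nhds.2 fun c ⟨t, ht, h⟩ =>
    (((hY t ht).tendsto c).eventually (eventually_lt_nhds h)).mono fun _ h' => ⟨t, ht, h'⟩
  have hB : IsOpen B := isOpen_iff_mem_nhds.2 fun c ⟨t, ht, h⟩ =>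
    (((hY t ht).tendsto c).eventually (eventually_gt_nhds h)).mono fun _ h' => ⟨t, ht, h'⟩
  by_contra hno
  have hcover : S ⊆ A ∪ B := by
    intro c hc
    by_contra hAB
    simp only [mem_union, A, B, mem_ofPred_eq, not_or, not_exists, not_and, not_lt] at hAB
    exact hno ⟨c, hc, fun t ht => ⟨hAB.1 t ht, hAB.2 t ht⟩⟩
  obtain ⟨c, -, ⟨t₁, ht₁, h₁⟩, ⟨t₂, ht₂, h₂⟩⟩ := hS A B hA hB hcover ⟨a, ha, ha'⟩ ⟨b, hb, hb'⟩
  exact (hexit c t₁ ht₁ h₁ t₂ ht₂).not_gt h₂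

section GlobalSolutions

variable {E : Type*} [NormedAddCommGroup E] [NormedSpace ℝ E] {v : ℝ → E → E}

theorem exists_forall_mem_Ioo_hasDerivAt [CompleteSpace E] (hcont : ∀ x, Continuous (v · x))
    {T : ℝ} (hT : 0 ≤ T) {K : ℝ≥0} (hK : ∀ t ∈ Icc (-T) T, LipschitzWith K (v t) ∧ ∀ x, ‖v t x‖ ≤ K)
    (x₀ : E) : ∃ f : ℝ → E, f 0 = x₀ ∧ ∀ t ∈ Ioo (-T) T, HasDerivAt f (v t (f t)) t := by
  -- the field is bounded by `K` everywhere, so a ball of radius `K * T` is never left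
  have hPL : IsPicardLindelof v (tmin := -T) (tmax := T) ⟨0, by simpa using hT⟩ x₀
      (K * T.toNNReal) 0 K K :=
    { lipschitzOnWith := fun t ht => (hK t ht).1.lipschitzOnWith
      continuousOn := fun x _ => (hcont x).continuousOn
      norm_le := fun t ht x _ => (hK t ht).2 x
      mul_max_le := by simp [hT] }
  obtain ⟨f, hf0, hf⟩ := hPL.exists_eq_forall_mem_Icc_hasDerivWithinAt₀
  exact ⟨f, hf0, fun t ht => (hf t (Ioo_subset_Icc_self ht)).hasDerivAt (Icc_mem_nhds ht.1 ht.2)⟩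

theorem exists_isIntegralCurve_of_lipschitzWith [CompleteSpace E]
    (hcont : ∀ x, Continuous (v · x))
    (hv : ∀ T, ∃ K : ℝ≥0, ∀ t ∈ Icc (-T) T, LipschitzWith K (v t) ∧ ∀ x, ‖v t x‖ ≤ K) (x₀ : E) :
    ∃ f : ℝ → E, f 0 = x₀ ∧ IsIntegralCurve f v := by
  choose K hK using hv
  choose F hF0 hF using fun n : ℕ =>
    exists_forall_mem_Ioo_hasDerivAt hcont n.cast_nonneg (hK n) x₀
  have agree : ∀ (m n : ℕ) (s : ℝ), |s| < m → |s| < n → F m s = F n s := by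
    intro m n s hm hn
    set μ := min (m : ℝ) n
    have hm' : Ioo (-μ) μ ⊆ Ioo (-(m : ℝ)) m :=
      Ioo_subset_Ioo (neg_le_neg (min_le_left _ _)) (min_le_left _ _)
    have hn' : Ioo (-μ) μ ⊆ Ioo (-(n : ℝ)) n :=
      Ioo_subset_Ioo (neg_le_neg (min_le_right _ _)) (min_le_right _ _)
    have hsμ : |s| < μ := lt_min hm hn
    exact ODE_solution_unique_of_mem_Ioo (s := fun _ => univ)
      (fun t ht => (hK m t (Ioo_subset_Icc_self (hm' ht))).1.lipschitzOnWith)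
      ⟨by linarith [abs_nonneg s], by linarith [abs_nonneg s]⟩
      (fun t ht => ⟨hF m t (hm' ht), mem_univ _⟩) (fun t ht => ⟨hF n t (hn' ht), mem_univ _⟩)
      ((hF0 m).trans (hF0 n).symm) (abs_lt.1 hsμ)
  let N : ℝ → ℕ := fun t => ⌈|t|⌉₊ + 1
  have hN : ∀ t, |t| < N t := fun t => by
    simp only [N]; push_cast; linarith [Nat.le_ceil |t|]
  refine ⟨fun t => F (N t) t, hF0 _, fun t => ?_⟩
  have hnear : ∀ᶠ s in 𝓝 t, |s| < (N t : ℝ) :=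
    continuous_abs.continuousAt.eventually_lt continuousAt_const (hN t)
  exact (hF (N t) t (abs_lt.1 (hN t))).congr_of_eventuallyEq
    (hnear.mono fun s hs => agree (N s) (N t) s (hN s) hs)

theorem lipschitzWith_apply_of_isIntegralCurve {Y : E → ℝ → E}
    (hY : ∀ x, IsIntegralCurve (Y x) v) (hY0 : ∀ x, Y x 0 = x) {T : ℝ} (hT : 0 ≤ T) {K : ℝ≥0}
    (hK : ∀ t ∈ Ico 0 T, LipschitzWith K (v t)) :
    LipschitzWith (Real.toNNReal (exp (K * T))) fun x => Y x T := by
  refine LipschitzWith.of_dist_le_mul fun x y => ?_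
  have := dist_le_of_trajectories_ODE_of_mem (s := fun _ => univ)
    (fun t ht => (hK t ht).lipschitzOnWith)
    (hY x).continuous.continuousOn (fun t _ => (hY x t).hasDerivWithinAt) (fun _ _ => mem_univ _)
    (hY y).continuous.continuousOn (fun t _ => (hY y t).hasDerivWithinAt) (fun _ _ => mem_univ _)
    (by rw [hY0, hY0]) T ⟨hT, le_rfl⟩
  rwa [sub_zero, mul_comm, ← Real.coe_toNNReal _ (exp_nonneg _)] at this

end GlobalSolutions

noncomputable def vectorField (t y : ℝ) : ℝ := -cos y + t * sin y

section VectorField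

@[simp] theorem vectorField_zero (t : ℝ) : vectorField t 0 = -1 := by simp [vectorField]

@[simp] theorem vectorField_pi (t : ℝ) : vectorField t π = 1 := by simp [vectorField]

theorem continuous_vectorField_apply (y : ℝ) : Continuous (vectorField · y) := by
  unfold vectorField; fun_prop

theorem lipschitzWith_vectorField (t : ℝ) : LipschitzWith (1 + ‖t‖₊) (vectorField t) := by
  have h := lipschitzWith_cos.neg.add ((lipschitzWith_smul t).comp lipschitzWith_sin)
  rwa [mul_one] at h

theorem norm_vectorField_le (t y : ℝ) : ‖vectorField t y‖ ≤ 1 + ‖t‖ := calc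
  ‖vectorField t y‖ ≤ ‖cos y‖ + ‖t‖ * ‖sin y‖ := by
    simpa [vectorField, norm_mul] using norm_add_le (-cos y) (t * sin y)
  _ ≤ 1 + ‖t‖ * 1 := by
    gcongr
    exacts [abs_cos_le_one y, abs_sin_le_one y]
  _ = 1 + ‖t‖ := by rw [mul_one]

theorem lipschitzWith_vectorField_and_norm_le {T t : ℝ} (ht : t ∈ Icc (-T) T) :
    LipschitzWith (1 + ‖T‖₊) (vectorField t) ∧ ∀ y, ‖vectorField t y‖ ≤ 1 + ‖T‖₊ := by
  have htT : ‖t‖ ≤ ‖T‖ := (abs_le.2 ht).trans (le_abs_self T)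
  refine ⟨(lipschitzWith_vectorField t).weaken ?_, fun y => (norm_vectorField_le t y).trans ?_⟩
  · rw [← NNReal.coe_le_coe]
    push_cast
    gcongr
  · push_cast
    gcongr

theorem exists_isIntegralCurve_vectorField (y₀ : ℝ) :
    ∃ y : ℝ → ℝ, y 0 = y₀ ∧ IsIntegralCurve y vectorField :=
  exists_isIntegralCurve_of_lipschitzWith continuous_vectorField_apply
    (fun T => ⟨1 + ‖T‖₊, fun _ => lipschitzWith_vectorField_and_norm_le⟩) y₀

variable {g : ℝ → ℝ} {t t₁ t₂ : ℝ}

namespace IsIntegralCurve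

theorem lt_zero_of_le (hg : IsIntegralCurve g vectorField) (h₁ : g t₁ < 0) (ht : t₁ ≤ t₂) :
    g t₂ < 0 :=
  image_lt_of_deriv_neg_boundary hg (fun t h => by simp [h]) h₁ ht

theorem pi_lt_of_le (hg : IsIntegralCurve g vectorField) (h₁ : π < g t₁) (ht : t₁ ≤ t₂) :
    π < g t₂ :=
  neg_lt_neg_iff.1 <| image_lt_of_deriv_neg_boundary (g := -g) (fun t => (hg t).neg)
    (fun t h => by rw [Pi.neg_apply, neg_inj] at h; simp [h]) (neg_lt_neg h₁) ht

theorem le_pi_of_lt_zero (hg : IsIntegralCurve g vectorField) (h₁ : g t₁ < 0) (t₂ : ℝ) :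
    g t₂ ≤ π := by
  rcases le_total t₁ t₂ with ht | ht
  · linarith [hg.lt_zero_of_le h₁ ht, pi_pos]
  · exact not_lt.1 fun h₂ => (hg.pi_lt_of_le h₂ ht).not_gt (h₁.trans pi_pos)

theorem exists_gt_lt_zero (hg : IsIntegralCurve g vectorField) (h : g t = 0) :
    ∃ s > t, g s < 0 := by
  have hderiv : HasDerivAt g (-1) t := by simpa [h] using hg t
  obtain ⟨s, hs, hst⟩ :=
    ((hderiv.eventually_nhdsGT_lt (by norm_num)).and self_mem_nhdsWithin).exists
  exact ⟨s, hst, h ▸ hs⟩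

theorem exists_gt_pi_lt (hg : IsIntegralCurve g vectorField) (h : g t = π) :
    ∃ s > t, π < g s := by
  have hderiv : HasDerivAt (-g) (-1) t := by simpa [h] using (hg t).neg
  obtain ⟨s, hs, hst⟩ :=
    ((hderiv.eventually_nhdsGT_lt (by norm_num)).and self_mem_nhdsWithin).exists
  exact ⟨s, hst, by simpa [h] using hs⟩

theorem forall_mem_Ioo_of_forall_mem_Icc (hg : IsIntegralCurve g vectorField)
    (h : ∀ t ≥ 0, g t ∈ Icc 0 π) : ∀ t ≥ 0, g t ∈ Ioo 0 π := by
  intro t ht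
  refine ⟨(h t ht).1.lt_of_ne fun h₀ => ?_, (h t ht).2.lt_of_ne fun hπ => ?_⟩
  · obtain ⟨s, hs, hgs⟩ := hg.exists_gt_lt_zero h₀.symm
    exact (h s (ht.trans hs.le)).1.not_gt hgs
  · obtain ⟨s, hs, hgs⟩ := hg.exists_gt_pi_lt hπ
    exact (h s (ht.trans hs.le)).2.not_gt hgs

end IsIntegralCurve

end VectorField

/-- The case `a = -1` of the system `ẋ = 1`, `ẏ = a cos y + x sin y` (with `x(0) = 0`,
so `x(t) = t`): although the vector field points strictly outward on the boundary of
the strip `0 ≤ y ≤ π`, the Ważewski method yields a solution of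
`y' = -cos y + t·sin y` that remains in the open strip `(0, π)` for all `t ≥ 0`. -/
theorem exists_solution_staying_in_strip :
    ∃ y : ℝ → ℝ, Differentiable ℝ y ∧
      (∀ t ≥ (0 : ℝ), deriv y t = -Real.cos (y t) + t * Real.sin (y t)) ∧
      ∀ t ≥ (0 : ℝ), y t ∈ Set.Ioo 0 Real.pi := by
  choose Y hY0 hY using exists_isIntegralCurve_vectorField
  have hcont : ∀ t ≥ 0, Continuous fun c => Y c t := fun t ht =>
    (lipschitzWith_apply_of_isIntegralCurve hY hY0 ht
      fun s hs => (lipschitzWith_vectorField_and_norm_le (T := t)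
        ⟨(neg_nonpos.2 ht).trans hs.1, hs.2.le⟩).1).continuous
  have hexit₀ : ∃ t ≥ 0, Y 0 t < 0 := by
    obtain ⟨s, hs, h⟩ := (hY 0).exists_gt_lt_zero (hY0 0)
    exact ⟨s, hs.le, h⟩
  have hexitπ : ∃ t ≥ 0, π < Y π t := by
    obtain ⟨s, hs, h⟩ := (hY π).exists_gt_pi_lt (hY0 π)
    exact ⟨s, hs.le, h⟩
  obtain ⟨c, -, hc⟩ := exists_forall_mem_Icc_of_isPreconnected isPreconnected_Icc hcont
    (left_mem_Icc.2 pi_pos.le) (right_mem_Icc.2 pi_pos.le) hexit₀ hexitπ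
    fun c t₁ _ h₁ t₂ _ => (hY c).le_pi_of_lt_zero h₁ t₂
  exact ⟨Y c, fun t => (hY c t).differentiableAt, fun t _ => (hY c t).deriv,
    (hY c).forall_mem_Ioo_of_forall_mem_Icc hc⟩
end

section
/- Consider the controlled inverted pendulum equation φ̈ = u(φ, φ̇)·sin φ − cos φ + v(φ, φ̇), where u, v : ℝ² → ℝ are smooth and the equation defines a continuous flow on ℝ² (in coordinates (φ, φ̇)). Assume |v(0,0)| < 1 and |v(π,0)| < 1, and assume (φ, φ̇) = (π/2, 0) is a Lyapunov stable equilibrium of the flow. Then (π/2, 0) is not globally attractive: there exists a solution φ(t) defined for all t ≥ 0 such that 0 < φ(t) < π for all t ≥ 0 and (φ(t), φ̇(t)) does not converge to (π/2, 0) as t → ∞. -/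
/-!
Let `A` (resp. `B`) be the set of states whose trajectory reaches `φ < 0` before `φ ≥ π`
(resp. `φ > π` before `φ ≤ 0`). Both are open by continuity of the flow, and disjoint.
Since `|v| < 1` at the rest points `(0, 0)` and `(π, 0)`, a trajectory touching the line `φ = 0`
(resp. `φ = π`) from inside crosses it at once; hence `(0, 0) ∈ A`, `(π, 0) ∈ B`, and every
trajectory leaving the strip `0 < φ < π` starts in `A ∪ B`. By connectedness the segment
`[0, π] × {0}` contains a point `p ∈ closure A \ (A ∪ B)`, whose trajectory stays in the strip.
If it converged to the stable equilibrium `(π/2, 0)`, stability would keep every trajectory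
starting near `p` in the strip forever, which is impossible near points of `A`.
-/

open Filter Topology Set Real Function

section Calculus

variable {f g : ℝ → ℝ} {y T : ℝ}

lemma HasDerivAt.eventually_nhdsGT_lt_s12 (hf : HasDerivAt f y T) (hy : y < 0) :
    ∀ᶠ t in 𝓝[>] T, f t < f T := by
  have hslope := (hasDerivAt_iff_tendsto_slope.mp hf).mono_left (nhdsGT_le_nhdsNE T)
  filter_upwards [hslope.eventually_lt_const hy, self_mem_nhdsWithin] with t ht hTt
  exact (slope_neg_iff_of_le (le_of_lt hTt)).mp ht

lemma HasDerivAt.nonpos_of_eventually_nhdsLT_le (hf : HasDerivAt f y T)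
    (h : ∀ᶠ t in 𝓝[<] T, f T ≤ f t) : y ≤ 0 := by
  have hslope := (hasDerivAt_iff_tendsto_slope.mp hf).mono_left (nhdsLT_le_nhdsNE T)
  refine le_of_tendsto hslope ?_
  filter_upwards [h, self_mem_nhdsWithin] with t ht htT
  rw [slope_comm]
  exact (slope_nonpos_iff_of_le (le_of_lt htT)).mpr ht

lemma HasDerivAt.nonneg_of_eventually_nhdsLT_le (hf : HasDerivAt f y T)
    (h : ∀ᶠ t in 𝓝[<] T, f t ≤ f T) : 0 ≤ y := by
  simpa using hf.neg.nonpos_of_eventually_nhdsLT_le (by simpa using h)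

lemma eventually_nhdsGT_lt_of_eventually_deriv_neg (hf : ∀ t, HasDerivAt f (g t) t)
    (hg : ∀ᶠ t in 𝓝[>] T, g t < 0) : ∀ᶠ t in 𝓝[>] T, f t < f T := by
  obtain ⟨w, hTw, hw⟩ := mem_nhdsGT_iff_exists_Ioc_subset.mp hg
  have hanti : StrictAntiOn f (Icc T w) := by
    refine strictAntiOn_of_deriv_neg (convex_Icc T w)
      (fun t _ => (hf t).continuousAt.continuousWithinAt) fun t ht => ?_
    rw [interior_Icc] at ht
    rw [(hf t).deriv]
    exact hw (Ioo_subset_Ioc_self ht)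
  filter_upwards [Ioc_mem_nhdsGT hTw] with t ht
  exact hanti (left_mem_Icc.mpr (le_of_lt hTw)) (Ioc_subset_Icc_self ht) ht.1

lemma eventually_nhdsGT_lt_of_hasDerivAt {c : ℝ} (hf : ∀ t, HasDerivAt f (g t) t)
    (hg : HasDerivAt g c T) (hgT : g T ≤ 0) (hc : g T = 0 → c < 0) :
    ∀ᶠ t in 𝓝[>] T, f t < f T := by
  refine eventually_nhdsGT_lt_of_eventually_deriv_neg hf ?_
  rcases hgT.lt_or_eq with hneg | hzero
  · exact nhdsWithin_le_nhds (hg.continuousAt.eventually (gt_mem_nhds hneg))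
  · simpa only [hzero] using hg.eventually_nhdsGT_lt_s12 (hc hzero)

lemma eventually_nhdsGT_gt_of_hasDerivAt {c : ℝ} (hf : ∀ t, HasDerivAt f (g t) t)
    (hg : HasDerivAt g c T) (hgT : 0 ≤ g T) (hc : g T = 0 → 0 < c) :
    ∀ᶠ t in 𝓝[>] T, f T < f t := by
  have := eventually_nhdsGT_lt_of_hasDerivAt (f := -f) (fun t => (hf t).neg) hg.neg
    (neg_nonpos.mpr hgT) fun h => neg_neg_of_pos (hc (neg_eq_zero.mp h))
  simpa using this

end Calculus

section Topology

variable {X : Type*} [TopologicalSpace X]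

lemma exists_first_exit {γ : ℝ → X} (hγ : Continuous γ) {U : Set X} (hU : IsOpen U)
    (h0 : γ 0 ∈ U) {t₀ : ℝ} (ht₀ : 0 ≤ t₀) (hout : γ t₀ ∉ U) :
    ∃ T > 0, γ T ∈ frontier U ∧ ∀ s ∈ Ico 0 T, γ s ∈ U := by
  set S := Icc 0 t₀ ∩ γ ⁻¹' Uᶜ
  have hSbdd : BddBelow S := ⟨0, fun t ht => ht.1.1⟩
  obtain ⟨⟨hT0, hTt₀⟩, hTU⟩ : sInf S ∈ S :=
    (isClosed_Icc.inter (hU.isClosed_compl.preimage hγ)).csInf_mem ⟨t₀, ⟨ht₀, le_rfl⟩, hout⟩ hSbdd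
  have hpos : 0 < sInf S := hT0.lt_of_ne fun h => hTU (h ▸ h0)
  have hbefore : ∀ s ∈ Ico 0 (sInf S), γ s ∈ U := fun s hs => by_contra fun hsU =>
    hs.2.not_ge (csInf_le hSbdd ⟨⟨hs.1, hs.2.le.trans hTt₀⟩, hsU⟩)
  have hclosure : γ (sInf S) ∈ closure U :=
    mem_closure_of_tendsto (hγ.continuousAt.tendsto.mono_left nhdsWithin_le_nhds)
      (mem_of_superset (Ioo_mem_nhdsLT hpos) fun s hs => hbefore s ⟨hs.1.le, hs.2⟩)
  exact ⟨sInf S, hpos, hU.frontier_eq ▸ ⟨hclosure, hTU⟩, hbefore⟩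

lemma IsPreconnected.exists_mem_closure_diff {S A B : Set X} (hS : IsPreconnected S)
    (hA : IsOpen A) (hB : IsOpen B) (hAB : Disjoint A B) (hSA : (S ∩ A).Nonempty)
    (hSB : (S ∩ B).Nonempty) : ∃ x ∈ S, x ∈ closure A \ A ∧ x ∉ B := by
  have hBA : B ⊆ (closure A)ᶜ := (hAB.closure_left hB).subset_compl_left
  have hcover : ¬ S ⊆ A ∪ (closure A)ᶜ := fun hcover => by
    obtain ⟨x, -, hxA, hxA'⟩ := hS A _ hA isClosed_closure.isOpen_compl hcover hSA
      (hSB.mono (inter_subset_inter_right S hBA))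
    exact hxA' (subset_closure hxA)
  obtain ⟨x, hxS, hx⟩ := not_subset.mp hcover
  simp only [mem_union, mem_compl_iff, not_or, not_not] at hx
  exact ⟨x, hxS, ⟨hx.2, hx.1⟩, fun hxB => hBA hxB hx.2⟩

end Topology

section Flow

variable {X : Type*} {F : X → ℝ → X}

def ReachesWithin (F : X → ℝ → X) (W U : Set X) (p : X) : Prop :=
  ∃ t ≥ (0 : ℝ), F p t ∈ U ∧ ∀ s ∈ Icc 0 t, F p s ∈ W

lemma ReachesWithin.not_reachesWithin {W U W' U' : Set X} {p : X} (h : ReachesWithin F W U p)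
    (hUW' : Disjoint U W') (hU'W : Disjoint U' W) : ¬ ReachesWithin F W' U' p := by
  rintro ⟨t', ht', hU', hW'⟩
  obtain ⟨t, ht, hU, hW⟩ := h
  rcases le_total t t' with htt' | ht't
  · exact hUW'.ne_of_mem hU (hW' t ⟨ht, htt'⟩) rfl
  · exact hU'W.ne_of_mem hU' (hW t' ⟨ht', ht't⟩) rfl

lemma reachesWithin_of_eventually_mem {W U : Set X} {p : X} {T : ℝ} (hUW : U ⊆ W) (hT : 0 ≤ T)
    (hW : ∀ s ∈ Icc 0 T, F p s ∈ W) (hU : ∀ᶠ t in 𝓝[>] T, F p t ∈ U) :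
    ReachesWithin F W U p := by
  obtain ⟨w, hTw, hw⟩ := mem_nhdsGT_iff_exists_Ioc_subset.mp hU
  refine ⟨w, hT.trans hTw.le, hw ⟨hTw, le_rfl⟩, fun s hs => ?_⟩
  rcases le_or_gt s T with hsT | hTs
  · exact hW s ⟨hs.1, hsT⟩
  · exact hUW (hw ⟨hTs, hs.2⟩)

variable [TopologicalSpace X]

def IsLyapunovStable (F : X → ℝ → X) (c : X) : Prop :=
  ∀ O : Set X, IsOpen O → c ∈ O → ∃ V : Set X, IsOpen V ∧ c ∈ V ∧ ∀ p ∈ V, ∀ t ≥ (0 : ℝ), F p t ∈ O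

lemma eventually_forall_mem_of_isCompact (hF : Continuous (uncurry F)) {K : Set ℝ}
    (hK : IsCompact K) {W : Set X} (hW : IsOpen W) {p : X} (h : ∀ s ∈ K, F p s ∈ W) :
    ∀ᶠ q in 𝓝 p, ∀ s ∈ K, F q s ∈ W :=
  hK.eventually_forall_of_forall_eventually fun s hs =>
    (hF.tendsto (p, s)).eventually (hW.mem_nhds (h s hs))

lemma isOpen_setOf_reachesWithin (hF : Continuous (uncurry F)) {W U : Set X} (hW : IsOpen W)
    (hU : IsOpen U) : IsOpen {p | ReachesWithin F W U p} := by
  refine isOpen_iff_mem_nhds.mpr fun p ⟨t, ht, hpU, hpW⟩ => ?_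
  have hUt : ∀ᶠ q in 𝓝 p, F q t ∈ U :=
    (hF.comp (continuous_id.prodMk continuous_const)).continuousAt.preimage_mem_nhds
      (hU.mem_nhds hpU)
  filter_upwards [hUt, eventually_forall_mem_of_isCompact hF isCompact_Icc hW hpW] with q hqU hqW
  exact ⟨t, ht, hqU, hqW⟩

lemma IsLyapunovStable.eventually_forall_ge_mem {c p : X} (hc : IsLyapunovStable F c)
    (hF : Continuous (uncurry F)) (hadd : ∀ p t s, F p (t + s) = F (F p t) s) {W : Set X}
    (hW : IsOpen W) (hcW : c ∈ W) (hp : ∀ t ≥ (0 : ℝ), F p t ∈ W)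
    (hpc : Tendsto (F p) atTop (𝓝 c)) : ∀ᶠ q in 𝓝 p, ∀ t ≥ (0 : ℝ), F q t ∈ W := by
  obtain ⟨V, hV, hcV, hVW⟩ := hc W hW hcW
  obtain ⟨T, hpT, hT⟩ := ((hpc.eventually (hV.mem_nhds hcV)).and (eventually_ge_atTop 0)).exists
  have hVT : ∀ᶠ q in 𝓝 p, F q T ∈ V :=
    (hF.comp (continuous_id.prodMk continuous_const)).continuousAt.preimage_mem_nhds
      (hV.mem_nhds hpT)
  filter_upwards [hVT, eventually_forall_mem_of_isCompact hF isCompact_Icc hW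
    fun s hs => hp s hs.1] with q hqV hqW t ht
  rcases le_or_gt t T with htT | hTt
  · exact hqW t ⟨ht, htT⟩
  · simpa only [← hadd, add_sub_cancel] using hVW _ hqV (t - T) (sub_nonneg.mpr hTt.le)

end Flow

section Pendulum

variable {u v : ℝ × ℝ → ℝ} {F : ℝ × ℝ → ℝ → ℝ × ℝ}

lemma reachesWithin_fst_neg
    (hode1 : ∀ p t, HasDerivAt (fun s => (F p s).1) ((F p t).2) t)
    (hode2 : ∀ p t, HasDerivAt (fun s => (F p s).2)
      (u (F p t) * sin (F p t).1 - cos (F p t).1 + v (F p t)) t)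
    (hv0 : v (0, 0) < 1) {p : ℝ × ℝ} {T : ℝ} (hT : 0 ≤ T) (hφ : (F p T).1 = 0)
    (hφ' : (F p T).2 ≤ 0) (hbefore : ∀ s ∈ Ico 0 T, (F p s).1 < π) :
    ReachesWithin F {q | q.1 < π} {q | q.1 < 0} p := by
  -- at the bottom rest point the acceleration is `v (0, 0) - 1 < 0`
  have hexit : ∀ᶠ t in 𝓝[>] T, (F p t).1 < 0 := by
    refine hφ ▸ eventually_nhdsGT_lt_of_hasDerivAt (hode1 p) (hode2 p T) hφ' fun hφ'0 => ?_
    rw [show F p T = (0, 0) from Prod.ext hφ hφ'0, sin_zero, cos_zero]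
    linarith
  refine reachesWithin_of_eventually_mem (fun q (hq : q.1 < 0) => hq.trans pi_pos) hT
    (fun s hs => ?_) hexit
  rcases hs.2.lt_or_eq with hsT | rfl
  · exact hbefore s ⟨hs.1, hsT⟩
  · exact show (F p s).1 < π from hφ ▸ pi_pos

lemma reachesWithin_fst_gt_pi
    (hode1 : ∀ p t, HasDerivAt (fun s => (F p s).1) ((F p t).2) t)
    (hode2 : ∀ p t, HasDerivAt (fun s => (F p s).2)
      (u (F p t) * sin (F p t).1 - cos (F p t).1 + v (F p t)) t)
    (hvπ : -1 < v (π, 0)) {p : ℝ × ℝ} {T : ℝ} (hT : 0 ≤ T) (hφ : (F p T).1 = π)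
    (hφ' : 0 ≤ (F p T).2) (hbefore : ∀ s ∈ Ico 0 T, 0 < (F p s).1) :
    ReachesWithin F {q | 0 < q.1} {q | π < q.1} p := by
  have hexit : ∀ᶠ t in 𝓝[>] T, π < (F p t).1 := by
    refine hφ ▸ eventually_nhdsGT_gt_of_hasDerivAt (hode1 p) (hode2 p T) hφ' fun hφ'0 => ?_
    rw [show F p T = (π, 0) from Prod.ext hφ hφ'0, sin_pi, cos_pi]
    linarith
  refine reachesWithin_of_eventually_mem (fun q (hq : π < q.1) => pi_pos.trans hq) hT
    (fun s hs => ?_) hexit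
  rcases hs.2.lt_or_eq with hsT | rfl
  · exact hbefore s ⟨hs.1, hsT⟩
  · exact show 0 < (F p s).1 from hφ ▸ pi_pos

lemma forall_fst_mem_Ioo_of_not_reachesWithin
    (hode1 : ∀ p t, HasDerivAt (fun s => (F p s).1) ((F p t).2) t)
    (hode2 : ∀ p t, HasDerivAt (fun s => (F p s).2)
      (u (F p t) * sin (F p t).1 - cos (F p t).1 + v (F p t)) t)
    (hv0 : v (0, 0) < 1) (hvπ : -1 < v (π, 0)) {p : ℝ × ℝ} (h0 : (F p 0).1 ∈ Ioo 0 π)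
    (hA : ¬ ReachesWithin F {q | q.1 < π} {q | q.1 < 0} p)
    (hB : ¬ ReachesWithin F {q | 0 < q.1} {q | π < q.1} p) :
    ∀ t ≥ (0 : ℝ), (F p t).1 ∈ Ioo 0 π := by
  intro t₀ ht₀
  by_contra hout
  have hφ : Continuous fun t => (F p t).1 :=
    continuous_iff_continuousAt.mpr fun t => (hode1 p t).continuousAt
  obtain ⟨T, hT, hTfr, hbefore⟩ := exists_first_exit hφ isOpen_Ioo h0 ht₀ hout
  have hleft : ∀ᶠ t in 𝓝[<] T, (F p t).1 ∈ Ioo 0 π :=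
    mem_of_superset (Ioo_mem_nhdsLT hT) fun s hs => hbefore s ⟨hs.1.le, hs.2⟩
  rw [frontier_Ioo pi_pos] at hTfr
  rcases hTfr with hT0 | hTπ
  · refine hA (reachesWithin_fst_neg hode1 hode2 hv0 hT.le hT0 ?_ fun s hs => (hbefore s hs).2)
    exact (hode1 p T).nonpos_of_eventually_nhdsLT_le (hleft.mono fun s hs => hT0 ▸ hs.1.le)
  · refine hB (reachesWithin_fst_gt_pi hode1 hode2 hvπ hT.le hTπ ?_ fun s hs => (hbefore s hs).1)
    exact (hode1 p T).nonneg_of_eventually_nhdsLT_le (hleft.mono fun s hs => hTπ ▸ hs.2.le)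

end Pendulum

theorem inverted_pendulum_not_globally_attractive_general
    (u v : ℝ × ℝ → ℝ)
    (F : ℝ × ℝ → ℝ → ℝ × ℝ)
    (hFcont : Continuous fun q : (ℝ × ℝ) × ℝ => F q.1 q.2)
    (hF0 : ∀ p, F p 0 = p)
    (hFadd : ∀ p t s, F p (t + s) = F (F p t) s)
    (hode1 : ∀ p t, HasDerivAt (fun s => (F p s).1) ((F p t).2) t)
    (hode2 : ∀ p t, HasDerivAt (fun s => (F p s).2)
      (u (F p t) * Real.sin (F p t).1 - Real.cos (F p t).1 + v (F p t)) t)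
    (hv0 : |v (0, 0)| < 1) (hvπ : |v (Real.pi, 0)| < 1)
    (hstab : ∀ O : Set (ℝ × ℝ), IsOpen O → (Real.pi / 2, (0 : ℝ)) ∈ O →
      ∃ V : Set (ℝ × ℝ), IsOpen V ∧ (Real.pi / 2, (0 : ℝ)) ∈ V ∧
        ∀ p ∈ V, ∀ t ≥ (0 : ℝ), F p t ∈ O) :
    ∃ p : ℝ × ℝ, (∀ t ≥ (0 : ℝ), 0 < (F p t).1 ∧ (F p t).1 < Real.pi) ∧
      ¬ Filter.Tendsto (fun t => F p t) Filter.atTop (nhds (Real.pi / 2, (0 : ℝ))) := by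
  set A := {p | ReachesWithin F {q : ℝ × ℝ | q.1 < π} {q | q.1 < 0} p}
  set B := {p | ReachesWithin F {q : ℝ × ℝ | 0 < q.1} {q | π < q.1} p}
  have hA : IsOpen A := isOpen_setOf_reachesWithin hFcont
    (isOpen_lt continuous_fst continuous_const) (isOpen_lt continuous_fst continuous_const)
  have hB : IsOpen B := isOpen_setOf_reachesWithin hFcont
    (isOpen_lt continuous_const continuous_fst) (isOpen_lt continuous_const continuous_fst)
  have hAB : Disjoint A B := disjoint_left.mpr fun p (hpA : ReachesWithin ..) =>
    hpA.not_reachesWithin (disjoint_left.mpr fun q (hq : q.1 < 0) (hq' : 0 < q.1) => hq.not_gt hq')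
      (disjoint_left.mpr fun q (hq : π < q.1) (hq' : q.1 < π) => hq.not_gt hq')
  have h0A : ((0 : ℝ), (0 : ℝ)) ∈ A :=
    reachesWithin_fst_neg hode1 hode2 (abs_lt.mp hv0).2 le_rfl (by rw [hF0]) (by rw [hF0])
      fun s hs => (hs.2.not_ge hs.1).elim
  have hπB : (π, (0 : ℝ)) ∈ B :=
    reachesWithin_fst_gt_pi hode1 hode2 (abs_lt.mp hvπ).1 le_rfl (by rw [hF0]) (by rw [hF0])
      fun s hs => (hs.2.not_ge hs.1).elim
  obtain ⟨_, ⟨x, hx, rfl⟩, ⟨hxA, hxA'⟩, hxB⟩ :=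
    (isPreconnected_Icc.image (fun x : ℝ => (x, (0 : ℝ))) (by fun_prop)).exists_mem_closure_diff
      hA hB hAB ⟨_, mem_image_of_mem _ ⟨le_rfl, pi_pos.le⟩, h0A⟩
      ⟨_, mem_image_of_mem _ ⟨pi_pos.le, le_rfl⟩, hπB⟩
  have hx0 : x ≠ 0 := by rintro rfl; exact hxA' h0A
  have hxπ : x ≠ π := by rintro rfl; exact hxB hπB
  have hstay := forall_fst_mem_Ioo_of_not_reachesWithin hode1 hode2 (abs_lt.mp hv0).2
    (abs_lt.mp hvπ).1 (hF0 (x, 0) ▸ ⟨hx.1.lt_of_ne' hx0, hx.2.lt_of_ne hxπ⟩) hxA' hxB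
  refine ⟨(x, 0), hstay, fun htend => ?_⟩
  have hnear := IsLyapunovStable.eventually_forall_ge_mem hstab hFcont hFadd
    (isOpen_Ioo.preimage continuous_fst) ⟨by positivity, by linarith [pi_pos]⟩ hstay htend
  obtain ⟨q, hq, t, ht, hqt, -⟩ := mem_closure_iff_nhds.mp hxA _ hnear
  exact (hq t ht).1.not_gt hqt

/-- The controlled inverted pendulum `φ̈ = u(φ, φ̇)·sin φ - cos φ + v(φ, φ̇)` with
smooth feedback controls `u, v`, generating a continuous flow `F` on `ℝ²` in the
coordinates `(φ, φ̇)`. If `|v(0,0)| < 1`, `|v(π,0)| < 1` and `(π/2, 0)` is a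
Lyapunov stable equilibrium, then `(π/2, 0)` is not globally attractive: some
solution satisfies `0 < φ(t) < π` for all `t ≥ 0` and does not converge to
`(π/2, 0)`. -/
theorem inverted_pendulum_not_globally_attractive
    (u v : ℝ × ℝ → ℝ)
    (hu : ContDiff ℝ (⊤ : ℕ∞) u) (hv : ContDiff ℝ (⊤ : ℕ∞) v)
    (F : ℝ × ℝ → ℝ → ℝ × ℝ)
    (hFcont : Continuous fun q : (ℝ × ℝ) × ℝ => F q.1 q.2)
    (hF0 : ∀ p, F p 0 = p)
    (hFadd : ∀ p t s, F p (t + s) = F (F p t) s)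
    (hode1 : ∀ p t, HasDerivAt (fun s => (F p s).1) ((F p t).2) t)
    (hode2 : ∀ p t, HasDerivAt (fun s => (F p s).2)
      (u (F p t) * Real.sin (F p t).1 - Real.cos (F p t).1 + v (F p t)) t)
    (hv0 : |v (0, 0)| < 1) (hvπ : |v (Real.pi, 0)| < 1)
    (hequil : ∀ t : ℝ, F (Real.pi / 2, 0) t = (Real.pi / 2, 0))
    (hstab : ∀ O : Set (ℝ × ℝ), IsOpen O → (Real.pi / 2, (0 : ℝ)) ∈ O →
      ∃ V : Set (ℝ × ℝ), IsOpen V ∧ (Real.pi / 2, (0 : ℝ)) ∈ V ∧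
        ∀ p ∈ V, ∀ t ≥ (0 : ℝ), F p t ∈ O) :
    ∃ p : ℝ × ℝ, (∀ t ≥ (0 : ℝ), 0 < (F p t).1 ∧ (F p t).1 < Real.pi) ∧
      ¬ Filter.Tendsto (fun t => F p t) Filter.atTop (nhds (Real.pi / 2, (0 : ℝ))) :=
  inverted_pendulum_not_globally_attractive_general u v F hFcont hF0 hFadd hode1 hode2 hv0 hvπ hstab
end

section
/- Consider the flow on ℝ² (in coordinates (φ, φ̇)) defined by the controlled inverted pendulum equation φ̈ = u(φ, φ̇)·sin φ − cos φ + v(φ, φ̇) with u, v : ℝ² → ℝ smooth, |v(0,0)| < 1 and |v(π,0)| < 1, and let W = {(φ, φ̇, t) : 0 < φ < π} in the extended phase space ℝ² × ℝ. Then the set of egress points equals the set of strict egress points and both equal {(φ, φ̇, t) : φ = 0, φ̇ < 0 or φ = π, φ̇ > 0}. In particular, points with φ = 0, φ̇ = 0 (and with φ = π, φ̇ = 0) are not egress points. -/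
open Set Filter Topology

namespace HasDerivAt

variable {f : ℝ → ℝ} {f' a : ℝ}

theorem eventually_lt_of_pos_nhdsLT (hf : HasDerivAt f f' a) (hf' : 0 < f') :
    ∀ᶠ t in 𝓝[<] a, f t < f a := by
  have hslope := (hasDerivAt_iff_tendsto_slope.mp hf).mono_left (nhdsLT_le_nhdsNE a)
  filter_upwards [hslope.eventually (eventually_gt_nhds hf'), self_mem_nhdsWithin]
    with t hpos (ht : t < a)
  exact (slope_pos_iff_gt ht).mp hpos

theorem eventually_gt_of_pos_nhdsGT (hf : HasDerivAt f f' a) (hf' : 0 < f') :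
    ∀ᶠ t in 𝓝[>] a, f a < f t := by
  have hslope := (hasDerivAt_iff_tendsto_slope.mp hf).mono_left (nhdsGT_le_nhdsNE a)
  filter_upwards [hslope.eventually (eventually_gt_nhds hf'), self_mem_nhdsWithin]
    with t hpos (ht : a < t)
  exact (slope_pos_iff ht).mp hpos

theorem eventually_gt_of_neg_nhdsLT (hf : HasDerivAt f f' a) (hf' : f' < 0) :
    ∀ᶠ t in 𝓝[<] a, f a < f t := by
  simpa using hf.neg.eventually_lt_of_pos_nhdsLT (neg_pos.mpr hf')

theorem eventually_lt_of_neg_nhdsGT (hf : HasDerivAt f f' a) (hf' : f' < 0) :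
    ∀ᶠ t in 𝓝[>] a, f t < f a := by
  simpa using hf.neg.eventually_gt_of_pos_nhdsGT (neg_pos.mpr hf')

end HasDerivAt

section SecondOrder

variable {x y : ℝ → ℝ} {a g : ℝ}

theorem eventually_lt_of_secondDeriv_neg_nhdsLT (hx : ∀ t, HasDerivAt x (y t) t)
    (hy : HasDerivAt y g a) (hya : y a = 0) (hg : g < 0) :
    ∀ᶠ t in 𝓝[<] a, x t < x a := by
  obtain ⟨l, hla, hyl⟩ := mem_nhdsLT_iff_exists_Ioo_subset.mp (hy.eventually_gt_of_neg_nhdsLT hg)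
  have hmono : StrictMonoOn x (Icc l a) := by
    refine strictMonoOn_of_hasDerivWithinAt_pos (convex_Icc l a)
      (fun t _ => (hx t).continuousAt.continuousWithinAt) (fun t _ => (hx t).hasDerivWithinAt)
      fun t ht => ?_
    rw [interior_Icc] at ht
    simpa [hya] using hyl ht
  filter_upwards [Ioo_mem_nhdsLT hla] with t ht
  exact hmono (Ioo_subset_Icc_self ht) (right_mem_Icc.mpr hla.out.le) ht.2

theorem eventually_gt_nhdsLT_iff_of_hasDerivAt (hx : ∀ t, HasDerivAt x (y t) t)
    (hy : HasDerivAt y g a) (hg : y a = 0 → g < 0) :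
    (∀ᶠ t in 𝓝[<] a, x a < x t) ↔ y a < 0 := by
  refine ⟨fun hleft => ?_, (hx a).eventually_gt_of_neg_nhdsLT⟩
  by_contra! hya
  have hbelow : ∀ᶠ t in 𝓝[<] a, x t < x a := by
    rcases hya.eq_or_lt with hya | hya
    · exact eventually_lt_of_secondDeriv_neg_nhdsLT hx hy hya.symm (hg hya.symm)
    · exact (hx a).eventually_lt_of_pos_nhdsLT hya
  obtain ⟨t, hgt, hlt⟩ := (hleft.and hbelow).exists
  exact hgt.asymm hlt

theorem eventually_lt_nhdsLT_iff_of_hasDerivAt (hx : ∀ t, HasDerivAt x (y t) t)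
    (hy : HasDerivAt y g a) (hg : y a = 0 → 0 < g) :
    (∀ᶠ t in 𝓝[<] a, x t < x a) ↔ 0 < y a := by
  simpa using eventually_gt_nhdsLT_iff_of_hasDerivAt (x := (-x ·)) (y := (-y ·))
    (fun t => (hx t).neg) hy.neg (by simpa using hg)

end SecondOrder

theorem exists_forall_Ioo_neg_iff_eventually_nhdsLT (P : ℝ → Prop) :
    (∃ ε > (0 : ℝ), ∀ t ∈ Ioo (-ε) 0, P t) ↔ ∀ᶠ t in 𝓝[<] 0, P t := by
  rw [eventually_iff, mem_nhdsLT_iff_exists_Ioo_subset]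
  constructor
  · rintro ⟨ε, hε, hP⟩
    exact ⟨-ε, neg_lt_zero.mpr hε, hP⟩
  · rintro ⟨l, hl, hP⟩
    exact ⟨-l, neg_pos.mpr hl, by rwa [neg_neg]⟩

theorem exists_forall_Ioo_pos_iff_eventually_nhdsGT (P : ℝ → Prop) :
    (∃ ε > (0 : ℝ), ∀ t ∈ Ioo 0 ε, P t) ↔ ∀ᶠ t in 𝓝[>] 0, P t := by
  rw [eventually_iff, mem_nhdsGT_iff_exists_Ioo_subset]
  rfl

section Egress

variable {M : Type*} [TopologicalSpace M] {φ : M → ℝ → M} {W : Set M} {x : M}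

theorem mem_flowEgress_iff :
    x ∈ flowEgress φ W ↔ x ∈ frontier W ∧ ∀ᶠ t in 𝓝[<] 0, φ x t ∈ W := by
  rw [← exists_forall_Ioo_neg_iff_eventually_nhdsLT]
  rfl

theorem mem_flowStrictEgress_iff :
    x ∈ flowStrictEgress φ W ↔ x ∈ flowEgress φ W ∧ ∀ᶠ t in 𝓝[>] 0, φ x t ∉ closure W := by
  rw [← exists_forall_Ioo_pos_iff_eventually_nhdsGT, closure_eq_self_union_frontier]
  rfl

end Egress

section Preimage

variable {M : Type*} [TopologicalSpace M] {h : M → ℝ} {a b : ℝ}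

theorem frontier_preimage_Ioo (hh : IsOpenMap h) (hc : Continuous h) (hab : a < b) :
    frontier (h ⁻¹' Ioo a b) = h ⁻¹' {a, b} := by
  rw [← hh.preimage_frontier_eq_frontier_preimage hc, frontier_Ioo hab]

theorem closure_preimage_Ioo (hh : IsOpenMap h) (hc : Continuous h) (hab : a < b) :
    closure (h ⁻¹' Ioo a b) = h ⁻¹' Icc a b := by
  rw [← hh.preimage_closure_eq_closure_preimage hc, closure_Ioo hab.ne]

end Preimage

section SecondOrderFlow

variable {F : ℝ × ℝ → ℝ → ℝ × ℝ} {f : ℝ × ℝ → ℝ} {a b : ℝ} {p : ℝ × ℝ}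

theorem eventually_mem_Ioo_nhdsLT_iff_of_fst_eq_left (hF0 : ∀ p, F p 0 = p)
    (hode1 : ∀ p t, HasDerivAt (fun s => (F p s).1) ((F p t).2) t)
    (hode2 : ∀ p t, HasDerivAt (fun s => (F p s).2) (f (F p t)) t)
    (hab : a < b) (hfa : f (a, 0) < 0) (hpa : p.1 = a) :
    (∀ᶠ t in 𝓝[<] 0, (F p t).1 ∈ Ioo a b) ↔ p.2 < 0 := by
  have hacc : HasDerivAt (fun s => (F p s).2) (f p) 0 := by simpa [hF0] using hode2 p 0
  have hbelow : ∀ᶠ t in 𝓝[<] 0, (F p t).1 < b :=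
    nhdsWithin_le_nhds <| (hode1 p 0).continuousAt.eventually_lt continuousAt_const
      (by simpa [hF0, hpa] using hab)
  have hturn : (F p 0).2 = 0 → f p < 0 := fun hp2 => by
    rwa [show p = (a, 0) from Prod.ext hpa (by simpa [hF0] using hp2)]
  simp only [mem_Ioo, eventually_and, hbelow, and_true]
  simpa [hF0, hpa] using eventually_gt_nhdsLT_iff_of_hasDerivAt (hode1 p) hacc hturn

theorem eventually_mem_Ioo_nhdsLT_iff_of_fst_eq_right (hF0 : ∀ p, F p 0 = p)
    (hode1 : ∀ p t, HasDerivAt (fun s => (F p s).1) ((F p t).2) t)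
    (hode2 : ∀ p t, HasDerivAt (fun s => (F p s).2) (f (F p t)) t)
    (hab : a < b) (hfb : 0 < f (b, 0)) (hpb : p.1 = b) :
    (∀ᶠ t in 𝓝[<] 0, (F p t).1 ∈ Ioo a b) ↔ 0 < p.2 := by
  have hacc : HasDerivAt (fun s => (F p s).2) (f p) 0 := by simpa [hF0] using hode2 p 0
  have habove : ∀ᶠ t in 𝓝[<] 0, a < (F p t).1 :=
    nhdsWithin_le_nhds <| continuousAt_const.eventually_lt (hode1 p 0).continuousAt
      (by simpa [hF0, hpb] using hab)
  have hturn : (F p 0).2 = 0 → 0 < f p := fun hp2 => by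
    rwa [show p = (b, 0) from Prod.ext hpb (by simpa [hF0] using hp2)]
  simp only [mem_Ioo, eventually_and, habove, true_and]
  simpa [hF0, hpb] using eventually_lt_nhdsLT_iff_of_hasDerivAt (hode1 p) hacc hturn

theorem eventually_notMem_Icc_nhdsGT_of_fst_eq_left (hF0 : ∀ p, F p 0 = p)
    (hode1 : ∀ p t, HasDerivAt (fun s => (F p s).1) ((F p t).2) t)
    (hpa : p.1 = a) (hp2 : p.2 < 0) :
    ∀ᶠ t in 𝓝[>] 0, (F p t).1 ∉ Icc a b := by
  have hvel : HasDerivAt (fun s => (F p s).1) p.2 0 := by simpa [hF0] using hode1 p 0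
  filter_upwards [hvel.eventually_lt_of_neg_nhdsGT hp2] with t ht hmem
  simp only [hF0, hpa] at ht
  exact ht.not_ge hmem.1

theorem eventually_notMem_Icc_nhdsGT_of_fst_eq_right (hF0 : ∀ p, F p 0 = p)
    (hode1 : ∀ p t, HasDerivAt (fun s => (F p s).1) ((F p t).2) t)
    (hpb : p.1 = b) (hp2 : 0 < p.2) :
    ∀ᶠ t in 𝓝[>] 0, (F p t).1 ∉ Icc a b := by
  have hvel : HasDerivAt (fun s => (F p s).1) p.2 0 := by simpa [hF0] using hode1 p 0
  filter_upwards [hvel.eventually_gt_of_pos_nhdsGT hp2] with t ht hmem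
  simp only [hF0, hpb] at ht
  exact ht.not_ge hmem.2

end SecondOrderFlow

section ExtendedPhaseSpace

variable {F : ℝ × ℝ → ℝ → ℝ × ℝ} {f : ℝ × ℝ → ℝ} {a b : ℝ}

theorem isOpenMap_fst_fst {X Y Z : Type*} [TopologicalSpace X] [TopologicalSpace Y]
    [TopologicalSpace Z] : IsOpenMap fun q : (X × Y) × Z => q.1.1 :=
  isOpenMap_fst.comp isOpenMap_fst

theorem flowEgress_extend_preimage_Ioo_eq (hF0 : ∀ p, F p 0 = p)
    (hode1 : ∀ p t, HasDerivAt (fun s => (F p s).1) ((F p t).2) t)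
    (hode2 : ∀ p t, HasDerivAt (fun s => (F p s).2) (f (F p t)) t)
    (hab : a < b) (hfa : f (a, 0) < 0) (hfb : 0 < f (b, 0)) :
    flowEgress (fun q t => (F q.1 t, q.2 + t)) ((fun q : (ℝ × ℝ) × ℝ => q.1.1) ⁻¹' Ioo a b) =
      {q | (q.1.1 = a ∧ q.1.2 < 0) ∨ (q.1.1 = b ∧ 0 < q.1.2)} := by
  ext ⟨p, τ⟩
  rw [mem_flowEgress_iff, frontier_preimage_Ioo isOpenMap_fst_fst (by fun_prop) hab]
  simp only [mem_preimage, mem_insert_iff, mem_singleton_iff, mem_ofPred_eq]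
  have lower := fun hpa =>
    eventually_mem_Ioo_nhdsLT_iff_of_fst_eq_left (p := p) hF0 hode1 hode2 hab hfa hpa
  have upper := fun hpb =>
    eventually_mem_Ioo_nhdsLT_iff_of_fst_eq_right (p := p) hF0 hode1 hode2 hab hfb hpb
  constructor
  · rintro ⟨hpa | hpb, hleft⟩
    · exact Or.inl ⟨hpa, (lower hpa).mp hleft⟩
    · exact Or.inr ⟨hpb, (upper hpb).mp hleft⟩
  · rintro (⟨hpa, hp2⟩ | ⟨hpb, hp2⟩)
    · exact ⟨Or.inl hpa, (lower hpa).mpr hp2⟩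
    · exact ⟨Or.inr hpb, (upper hpb).mpr hp2⟩

theorem flowStrictEgress_extend_preimage_Ioo_eq (hF0 : ∀ p, F p 0 = p)
    (hode1 : ∀ p t, HasDerivAt (fun s => (F p s).1) ((F p t).2) t)
    (hode2 : ∀ p t, HasDerivAt (fun s => (F p s).2) (f (F p t)) t)
    (hab : a < b) (hfa : f (a, 0) < 0) (hfb : 0 < f (b, 0)) :
    flowStrictEgress (fun q t => (F q.1 t, q.2 + t)) ((fun q : (ℝ × ℝ) × ℝ => q.1.1) ⁻¹' Ioo a b) =
      flowEgress (fun q t => (F q.1 t, q.2 + t)) ((fun q : (ℝ × ℝ) × ℝ => q.1.1) ⁻¹' Ioo a b) := by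
  refine Subset.antisymm (fun _ hq => hq.1) fun q hq => mem_flowStrictEgress_iff.mpr ⟨hq, ?_⟩
  rw [closure_preimage_Ioo isOpenMap_fst_fst (by fun_prop) hab]
  rw [flowEgress_extend_preimage_Ioo_eq hF0 hode1 hode2 hab hfa hfb] at hq
  rcases hq with ⟨hpa, hp2⟩ | ⟨hpb, hp2⟩
  · exact eventually_notMem_Icc_nhdsGT_of_fst_eq_left hF0 hode1 hpa hp2
  · exact eventually_notMem_Icc_nhdsGT_of_fst_eq_right hF0 hode1 hpb hp2

end ExtendedPhaseSpace

theorem inverted_pendulum_egress_eq_strictEgress_general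
    (u v : ℝ × ℝ → ℝ)
    (F : ℝ × ℝ → ℝ → ℝ × ℝ)
    (hF0 : ∀ p, F p 0 = p)
    (hode1 : ∀ p t, HasDerivAt (fun s => (F p s).1) ((F p t).2) t)
    (hode2 : ∀ p t, HasDerivAt (fun s => (F p s).2)
      (u (F p t) * Real.sin (F p t).1 - Real.cos (F p t).1 + v (F p t)) t)
    (hv0 : |v (0, 0)| < 1) (hvπ : |v (Real.pi, 0)| < 1)
    -- the flow on the extended phase space `ℝ² × ℝ`
    (Fe : (ℝ × ℝ) × ℝ → ℝ → (ℝ × ℝ) × ℝ)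
    (hFe : Fe = fun q t => (F q.1 t, q.2 + t))
    (W : Set ((ℝ × ℝ) × ℝ))
    (hW : W = {q : (ℝ × ℝ) × ℝ | 0 < q.1.1 ∧ q.1.1 < Real.pi}) :
    flowEgress Fe W = flowStrictEgress Fe W ∧
    flowEgress Fe W = {q : (ℝ × ℝ) × ℝ |
      (q.1.1 = 0 ∧ q.1.2 < 0) ∨ (q.1.1 = Real.pi ∧ 0 < q.1.2)} ∧
    (∀ t : ℝ, (((0 : ℝ), (0 : ℝ)), t) ∉ flowEgress Fe W ∧
      ((Real.pi, (0 : ℝ)), t) ∉ flowEgress Fe W) := by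
  subst hFe
  obtain rfl : W = (fun q : (ℝ × ℝ) × ℝ => q.1.1) ⁻¹' Ioo 0 Real.pi := hW
  let f : ℝ × ℝ → ℝ := fun q => u q * Real.sin q.1 - Real.cos q.1 + v q
  have hode2' : ∀ p t, HasDerivAt (fun s => (F p s).2) (f (F p t)) t := hode2
  have hfa : f (0, 0) < 0 := by
    simp only [f, Real.sin_zero, Real.cos_zero, mul_zero, zero_sub]
    linarith [(abs_lt.mp hv0).2]
  have hfb : 0 < f (Real.pi, 0) := by
    simp only [f, Real.sin_pi, Real.cos_pi, mul_zero, sub_neg_eq_add]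
    linarith [(abs_lt.mp hvπ).1]
  have hegress := flowEgress_extend_preimage_Ioo_eq hF0 hode1 hode2' Real.pi_pos hfa hfb
  refine ⟨(flowStrictEgress_extend_preimage_Ioo_eq hF0 hode1 hode2' Real.pi_pos hfa hfb).symm,
    hegress, fun t => ?_⟩
  simp [hegress, Real.pi_ne_zero]

/-- For the flow of the controlled inverted pendulum
`φ̈ = u(φ, φ̇)·sin φ - cos φ + v(φ, φ̇)` (with smooth `u, v`, `|v(0,0)| < 1`,
`|v(π,0)| < 1`), extended to the extended phase space `ℝ² × ℝ`, and the set
`W = {(φ, φ̇, t) : 0 < φ < π}`, the egress points coincide with the strict egress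
points and both equal `{(φ, φ̇, t) : (φ = 0 ∧ φ̇ < 0) ∨ (φ = π ∧ φ̇ > 0)}`;
in particular the points with `φ = 0, φ̇ = 0` and `φ = π, φ̇ = 0` are not egress
points. -/
theorem inverted_pendulum_egress_eq_strictEgress
    (u v : ℝ × ℝ → ℝ)
    (hu : ContDiff ℝ (⊤ : ℕ∞) u) (hv : ContDiff ℝ (⊤ : ℕ∞) v)
    (F : ℝ × ℝ → ℝ → ℝ × ℝ)
    (hFcont : Continuous fun q : (ℝ × ℝ) × ℝ => F q.1 q.2)
    (hF0 : ∀ p, F p 0 = p)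
    (hFadd : ∀ p t s, F p (t + s) = F (F p t) s)
    (hode1 : ∀ p t, HasDerivAt (fun s => (F p s).1) ((F p t).2) t)
    (hode2 : ∀ p t, HasDerivAt (fun s => (F p s).2)
      (u (F p t) * Real.sin (F p t).1 - Real.cos (F p t).1 + v (F p t)) t)
    (hv0 : |v (0, 0)| < 1) (hvπ : |v (Real.pi, 0)| < 1)
    -- the flow on the extended phase space `ℝ² × ℝ`
    (Fe : (ℝ × ℝ) × ℝ → ℝ → (ℝ × ℝ) × ℝ)
    (hFe : Fe = fun q t => (F q.1 t, q.2 + t))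
    (W : Set ((ℝ × ℝ) × ℝ))
    (hW : W = {q : (ℝ × ℝ) × ℝ | 0 < q.1.1 ∧ q.1.1 < Real.pi}) :
    flowEgress Fe W = flowStrictEgress Fe W ∧
    flowEgress Fe W = {q : (ℝ × ℝ) × ℝ |
      (q.1.1 = 0 ∧ q.1.2 < 0) ∨ (q.1.1 = Real.pi ∧ 0 < q.1.2)} ∧
    (∀ t : ℝ, (((0 : ℝ), (0 : ℝ)), t) ∉ flowEgress Fe W ∧
      ((Real.pi, (0 : ℝ)), t) ∉ flowEgress Fe W) :=
  inverted_pendulum_egress_eq_strictEgress_general u v F hF0 hode1 hode2 hv0 hvπ Fe hFe W hW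
end

section
/- Consider the non-autonomous controlled inverted pendulum equation φ̈ = u(φ, φ̇, t)·sin φ − cos φ + v(φ, φ̇, t) + f(t)·sin φ, where u, v : ℝ³ → ℝ and f : ℝ → ℝ are smooth, the equation defines a continuous semi-process on ℝ² (in coordinates (φ, φ̇)), |v(0,0,t)| < 1 and |v(π,0,t)| < 1 for all t, and (π/2, 0) is a uniformly Lyapunov stable equilibrium. Then (π/2, 0) is not globally attractive: there exists a solution φ(t) with 0 < φ(t) < π for all t ≥ 0 not converging to (π/2, 0). -/
/-!
Ważewski's retract argument on the segment `{(s, 0) : 0 ≤ s ≤ π}` of initial states. At the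
rest states `(0, 0)` and `(π, 0)` the acceleration is `v(0, 0, t) - 1 < 0`, resp.
`v(π, 0, t) + 1 > 0`, so a solution reaching a wall of the strip `0 < φ < π` leaves the closed
strip immediately: arriving with nonzero speed it crosses by the first derivative, arriving at
rest by the second. Hence the initial points whose solutions leave through `φ < 0`, and those
whose solutions leave through `φ > π`, are disjoint open sets containing `0` and `π`, and all
remaining initial points give confined solutions; by connectedness of `[0, π]` the set of
confined initial points is not open. But if every confined solution tended to `(π/2, 0)`, it
would enter a neighbourhood `V` from which, by uniform stability, no solution ever leaves the
strip, and by continuity so would every nearby solution: the confined set would be open.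
-/

open Set Filter Topology Function

section Derivatives

variable {x : ℝ → ℝ} {a d : ℝ}

lemma HasDerivWithinAt.eventually_lt_nhdsGT (hx : HasDerivWithinAt x d (Ici a) a) (hd : d < 0) :
    ∀ᶠ t in 𝓝[>] a, x t < x a := by
  have hslope : Tendsto (slope x a) (𝓝[>] a) (𝓝 d) := by
    simpa [Ici_sdiff_left] using hasDerivWithinAt_iff_tendsto_slope.mp hx
  filter_upwards [hslope.eventually_lt_const hd, self_mem_nhdsWithin] with t ht (hat : a < t)
  rw [slope_def_field, div_lt_iff₀ (sub_pos.2 hat), zero_mul] at ht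
  linarith

lemma HasDerivWithinAt.nonpos_of_eventually_le_nhdsLT (hx : HasDerivWithinAt x d (Iic a) a)
    (h : ∀ᶠ t in 𝓝[<] a, x a ≤ x t) : d ≤ 0 := by
  have hslope : Tendsto (slope x a) (𝓝[<] a) (𝓝 d) := by
    simpa [Iic_sdiff_right] using hasDerivWithinAt_iff_tendsto_slope.mp hx
  refine le_of_tendsto hslope ?_
  filter_upwards [h, self_mem_nhdsWithin] with t hxt (hta : t < a)
  rw [slope_def_field]
  exact div_nonpos_of_nonneg_of_nonpos (sub_nonneg.2 hxt) (sub_nonpos.2 hta.le)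

lemma eventually_lt_nhdsGT_of_hasDerivWithinAt_of_eq_zero {y : ℝ → ℝ} {c : ℝ}
    (hx : ∀ t ≥ a, HasDerivWithinAt x (y t) (Ici a) t) (hy : HasDerivWithinAt y c (Ici a) a)
    (hya : y a = 0) (hc : c < 0) : ∀ᶠ t in 𝓝[>] a, x t < x a := by
  obtain ⟨u, hau, hyu⟩ := mem_nhdsGT_iff_exists_Ioc_subset.1 (hy.eventually_lt_nhdsGT hc)
  have hanti : StrictAntiOn x (Icc a u) := by
    refine strictAntiOn_of_hasDerivWithinAt_neg (convex_Icc a u)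
      (fun t ht => (hx t ht.1).continuousWithinAt.mono Icc_subset_Ici_self)
      (fun t ht => (hx t (interior_subset ht).1).mono (interior_subset.trans Icc_subset_Ici_self))
      fun t ht => ?_
    rw [interior_Icc] at ht
    exact hya ▸ hyu ⟨ht.1, ht.2.le⟩
  filter_upwards [Ioc_mem_nhdsGT hau] with t ht
  exact hanti ⟨le_rfl, hau.le⟩ ⟨ht.1.le, ht.2⟩ ht.1

end Derivatives

def CrossesDownAt (y : ℝ → ℝ) (a : ℝ) : Prop :=
  ∀ T ≥ 0, y T = a → (∀ r ∈ Ico 0 T, a < y r) → ∀ᶠ t in 𝓝[>] T, y t < a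

def CrossesUpAt (y : ℝ → ℝ) (b : ℝ) : Prop :=
  ∀ T ≥ 0, y T = b → (∀ r ∈ Ico 0 T, y r < b) → ∀ᶠ t in 𝓝[>] T, b < y t

lemma crossesDownAt_neg_iff {y : ℝ → ℝ} {b : ℝ} : CrossesDownAt (-y) (-b) ↔ CrossesUpAt y b := by
  simp [CrossesDownAt, CrossesUpAt]

lemma crossesDownAt_of_hasDerivWithinAt {x y g : ℝ → ℝ} {a : ℝ}
    (hx : ∀ t ≥ 0, HasDerivWithinAt x (y t) (Ici 0) t)
    (hy : ∀ t ≥ 0, HasDerivWithinAt y (g t) (Ici 0) t) (hy0 : y 0 ≤ 0)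
    (hg : ∀ t ≥ 0, x t = a → y t = 0 → g t < 0) : CrossesDownAt x a := by
  intro T hT hxT hpre
  have hxT' : ∀ t ≥ T, HasDerivWithinAt x (y t) (Ici T) t :=
    fun t ht => (hx t (hT.trans ht)).mono (Ici_subset_Ici.2 hT)
  have hyT : y T ≤ 0 := by
    rcases hT.eq_or_lt with rfl | hTpos
    · exact hy0
    · refine ((hx T hT).hasDerivAt (Ici_mem_nhds hTpos)).hasDerivWithinAt
        |>.nonpos_of_eventually_le_nhdsLT ?_
      filter_upwards [Ico_mem_nhdsLT hTpos] with r hr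
      exact hxT ▸ (hpre r hr).le
  rw [← hxT]
  rcases hyT.lt_or_eq with hneg | hzero
  · exact (hxT' T le_rfl).eventually_lt_nhdsGT hneg
  · exact eventually_lt_nhdsGT_of_hasDerivWithinAt_of_eq_zero hxT'
      ((hy T hT).mono (Ici_subset_Ici.2 hT)) hzero (hg T hT hxT hzero)

def ExitsBelow (y : ℝ → ℝ) (a b : ℝ) : Prop :=
  ∃ t ≥ 0, y t < a ∧ ∀ r ∈ Icc 0 t, y r < b

def ExitsAbove (y : ℝ → ℝ) (a b : ℝ) : Prop :=
  ∃ t ≥ 0, b < y t ∧ ∀ r ∈ Icc 0 t, a < y r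

section Exits

variable {y : ℝ → ℝ} {a b T : ℝ}

lemma exitsBelow_neg_iff : ExitsBelow (-y) (-b) (-a) ↔ ExitsAbove y a b := by
  simp [ExitsBelow, ExitsAbove]

lemma ExitsBelow.not_exitsAbove (h : ExitsBelow y a b) : ¬ ExitsAbove y a b := by
  rintro ⟨t₂, ht₂, hbt₂, hpre₂⟩
  obtain ⟨t₁, ht₁, hat₁, hpre₁⟩ := h
  rcases le_total t₁ t₂ with h | h
  · exact (hpre₂ t₁ ⟨ht₁, h⟩).not_gt hat₁
  · exact (hpre₁ t₂ ⟨ht₂, h⟩).not_gt hbt₂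

lemma exitsBelow_of_eventually (hT : 0 ≤ T) (hab : a < b) (hyT : y T = a)
    (hpre : ∀ r ∈ Ico 0 T, y r < b) (h : ∀ᶠ t in 𝓝[>] T, y t < a) : ExitsBelow y a b := by
  obtain ⟨u, hTu, hu⟩ := mem_nhdsGT_iff_exists_Ioc_subset.1 h
  refine ⟨u, hT.trans hTu.le, hu ⟨hTu, le_rfl⟩, fun r hr => ?_⟩
  rcases lt_trichotomy r T with hrT | rfl | hTr
  · exact hpre r ⟨hr.1, hrT⟩
  · exact hyT ▸ hab
  · exact (hu ⟨hTr, hr.2⟩ : y r < a).trans hab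

lemma exitsAbove_of_eventually (hT : 0 ≤ T) (hab : a < b) (hyT : y T = b)
    (hpre : ∀ r ∈ Ico 0 T, a < y r) (h : ∀ᶠ t in 𝓝[>] T, b < y t) : ExitsAbove y a b := by
  rw [← exitsBelow_neg_iff]
  exact exitsBelow_of_eventually hT (neg_lt_neg hab) (by simp [hyT])
    (fun r hr => neg_lt_neg (hpre r hr)) (by simpa using h)

lemma exists_first_exit_Ioo (hy : ContinuousOn y (Ici 0)) (h0 : y 0 ∈ Icc a b)
    (h : ∃ t ≥ 0, y t ∉ Ioo a b) :
    ∃ T ≥ 0, (y T = a ∨ y T = b) ∧ ∀ r ∈ Ico 0 T, y r ∈ Ioo a b := by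
  set S := Ici 0 ∩ y ⁻¹' (Ioo a b)ᶜ
  have hS : IsClosed S := hy.preimage_isClosed_of_isClosed isClosed_Ici isOpen_Ioo.isClosed_compl
  have hbdd : BddBelow S := ⟨0, fun t ht => ht.1⟩
  obtain ⟨hT0, hTout⟩ : sInf S ∈ S := hS.csInf_mem (let ⟨t, ht, hyt⟩ := h; ⟨t, ht, hyt⟩) hbdd
  have hpre : ∀ r ∈ Ico 0 (sInf S), y r ∈ Ioo a b := fun r hr =>
    by_contra fun hyr => (csInf_le hbdd ⟨hr.1, hyr⟩).not_gt hr.2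
  have hTIcc : y (sInf S) ∈ Icc a b := by
    rcases (mem_Ici.1 hT0).eq_or_lt with hT | hT
    · rwa [← hT]
    · have hcl := (hy.mono ((closure_Ico hT.ne).subset.trans Icc_subset_Ici_self)).image_closure
      refine (isClosed_Icc.closure_subset_iff.2 ?_) (hcl ⟨sInf S, ?_, rfl⟩)
      · exact image_subset_iff.2 fun r hr => Ioo_subset_Icc_self (hpre r hr)
      · rw [closure_Ico hT.ne]; exact right_mem_Icc.2 hT.le
  refine ⟨sInf S, hT0, ?_, hpre⟩
  simp only [mem_preimage, mem_compl_iff, mem_Ioo, not_and_or, not_lt] at hTout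
  rcases hTout with h | h
  · exact Or.inl (le_antisymm h hTIcc.1)
  · exact Or.inr (le_antisymm hTIcc.2 h)

lemma forall_mem_Ioo_or_exitsBelow_or_exitsAbove (hab : a < b) (hy : ContinuousOn y (Ici 0))
    (h0 : y 0 ∈ Icc a b) (ha : CrossesDownAt y a) (hb : CrossesUpAt y b) :
    (∀ t ≥ 0, y t ∈ Ioo a b) ∨ ExitsBelow y a b ∨ ExitsAbove y a b := by
  refine or_iff_not_imp_left.2 fun hleave => ?_
  push Not at hleave
  obtain ⟨T, hT, hyT | hyT, hpre⟩ := exists_first_exit_Ioo hy h0 hleave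
  · exact Or.inl <| exitsBelow_of_eventually hT hab hyT (fun r hr => (hpre r hr).2)
      (ha T hT hyT fun r hr => (hpre r hr).1)
  · exact Or.inr <| exitsAbove_of_eventually hT hab hyT (fun r hr => (hpre r hr).1)
      (hb T hT hyT fun r hr => (hpre r hr).2)

end Exits

lemma isOpen_setOf_forall_Icc_mem_s14 {X Y : Type*} [TopologicalSpace X] [TopologicalSpace Y]
    {F : X → ℝ → Y} (hF : ContinuousOn (uncurry F) (univ ×ˢ Ici 0)) {U : Set Y} (hU : IsOpen U)
    (t : ℝ) : IsOpen {p | ∀ r ∈ Icc 0 t, F p r ∈ U} := by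
  obtain ⟨O, hO, hOeq⟩ := continuousOn_iff'.1 hF U hU
  have hmem : ∀ q ∈ univ ×ˢ Ici 0, q ∈ O ↔ uncurry F q ∈ U := fun q hq => by
    simpa [hq] using (Set.ext_iff.1 hOeq q).symm
  refine isOpen_iff_mem_nhds.2 fun p hp => ?_
  have hnear : ∀ r ∈ Icc 0 t, ∀ᶠ q : X × ℝ in 𝓝 (p, r), q ∈ O := fun r hr =>
    hO.mem_nhds ((hmem (p, r) ⟨mem_univ _, hr.1⟩).2 (hp r hr))
  filter_upwards [isCompact_Icc.eventually_forall_of_forall_eventually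
    (P := fun p' r => (p', r) ∈ O) hnear] with p' hp' r hr
  exact (hmem (p', r) ⟨mem_univ _, hr.1⟩).1 (hp' r hr)

section Family

variable {X : Type*} [TopologicalSpace X] {x : X → ℝ → ℝ}

lemma isOpen_setOf_exitsBelow (hx : ContinuousOn (uncurry x) (univ ×ˢ Ici 0)) (a b : ℝ) :
    IsOpen {p | ExitsBelow (x p) a b} := by
  refine isOpen_iff_mem_nhds.2 fun p ⟨t, ht, hxt, hpre⟩ => ?_
  have hcont : Continuous fun q => x q t :=
    hx.comp_continuous (continuous_id.prodMk continuous_const) fun q => ⟨mem_univ q, ht⟩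
  filter_upwards [(isOpen_lt hcont continuous_const).mem_nhds hxt,
    (isOpen_setOf_forall_Icc_mem_s14 hx isOpen_Iio t).mem_nhds hpre] with q hq hqpre
  exact ⟨t, ht, hq, hqpre⟩

lemma isOpen_setOf_exitsAbove (hx : ContinuousOn (uncurry x) (univ ×ˢ Ici 0)) (a b : ℝ) :
    IsOpen {p | ExitsAbove (x p) a b} := by
  simpa only [← exitsBelow_neg_iff] using
    isOpen_setOf_exitsBelow (x := fun p => -x p) hx.neg (-b) (-a)

end Family

theorem not_isOpen_setOf_forall_mem_Ioo {x : ℝ → ℝ → ℝ} {a b : ℝ} (hab : a < b)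
    (hx : ContinuousOn (uncurry x) (univ ×ˢ Ici 0)) (hx0 : ∀ s, x s 0 = s)
    (ha : ∀ s ∈ Icc a b, CrossesDownAt (x s) a) (hb : ∀ s ∈ Icc a b, CrossesUpAt (x s) b) :
    ¬ IsOpen {s | ∀ t ≥ 0, x s t ∈ Ioo a b} := by
  intro hconf
  have hstart_a : ExitsBelow (x a) a b :=
    exitsBelow_of_eventually le_rfl hab (hx0 a) (by simp)
      (ha a (left_mem_Icc.2 hab.le) 0 le_rfl (hx0 a) (by simp))
  have hstart_b : ExitsAbove (x b) a b :=
    exitsAbove_of_eventually le_rfl hab (hx0 b) (by simp)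
      (hb b (right_mem_Icc.2 hab.le) 0 le_rfl (hx0 b) (by simp))
  have hcover : Icc a b ⊆ ({s | ExitsBelow (x s) a b} ∪ {s | ∀ t ≥ 0, x s t ∈ Ioo a b}) ∪
      {s | ExitsAbove (x s) a b} := fun s hs => by
    have hxs : ContinuousOn (x s) (Ici 0) :=
      hx.comp (continuous_const.prodMk continuous_id).continuousOn fun t ht => ⟨mem_univ s, ht⟩
    rcases forall_mem_Ioo_or_exitsBelow_or_exitsAbove hab hxs ((hx0 s).symm ▸ hs) (ha s hs)
      (hb s hs) with h | h | h
    exacts [Or.inl (Or.inr h), Or.inl (Or.inl h), Or.inr h]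
  obtain ⟨s, -, hs, hsB⟩ := isPreconnected_Icc _ _ ((isOpen_setOf_exitsBelow hx a b).union hconf)
    (isOpen_setOf_exitsAbove hx a b) hcover ⟨a, left_mem_Icc.2 hab.le, Or.inl hstart_a⟩
    ⟨b, right_mem_Icc.2 hab.le, hstart_b⟩
  rcases hs with hsA | hsC
  · exact hsA.not_exitsAbove hsB
  · obtain ⟨t, ht, hbt, -⟩ := hsB
    exact (hsC t ht).2.not_gt hbt

lemma isOpen_setOf_forall_mem_of_absorbing {X : Type*} [TopologicalSpace X]
    {Φ : X → ℝ → ℝ → X} (hcont : ContinuousOn (fun q : X × ℝ => Φ q.1 0 q.2) (univ ×ˢ Ici 0))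
    (hadd : ∀ (p : X) (t₀ t s : ℝ), 0 ≤ t → 0 ≤ s → Φ p t₀ (t + s) = Φ (Φ p t₀ t) (t₀ + t) s)
    {O V : Set X} (hO : IsOpen O) (hV : IsOpen V)
    (hVO : ∀ p ∈ V, ∀ t₀ ≥ (0 : ℝ), ∀ t ≥ (0 : ℝ), Φ p t₀ t ∈ O)
    (henter : ∀ p, (∀ t ≥ 0, Φ p 0 t ∈ O) → ∃ T ≥ 0, Φ p 0 T ∈ V) :
    IsOpen {p | ∀ t ≥ 0, Φ p 0 t ∈ O} := by
  refine isOpen_iff_mem_nhds.2 fun p hp => ?_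
  obtain ⟨T, hT, hpT⟩ := henter p hp
  have hcontT : Continuous fun q => Φ q 0 T :=
    hcont.comp_continuous (continuous_id.prodMk continuous_const) fun q => ⟨mem_univ q, hT⟩
  filter_upwards [(hV.preimage hcontT).mem_nhds hpT,
    (isOpen_setOf_forall_Icc_mem_s14 (F := fun p r => Φ p 0 r) hcont hO T).mem_nhds
      fun r hr => hp r hr.1] with q hqV hqO t ht
  rcases le_or_gt t T with htT | hTt
  · exact hqO t ⟨ht, htT⟩
  · have h := hVO _ hqV (0 + T) (by simpa using hT) (t - T) (sub_nonneg.2 hTt.le)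
    rwa [← hadd q 0 T (t - T) hT (sub_nonneg.2 hTt.le), add_sub_cancel] at h

noncomputable def pendulumAccel (u v : ℝ × ℝ × ℝ → ℝ) (f : ℝ → ℝ) (φ ω t : ℝ) : ℝ :=
  u (φ, ω, t) * Real.sin φ - Real.cos φ + v (φ, ω, t) + f t * Real.sin φ

section Pendulum

variable {u v : ℝ × ℝ × ℝ → ℝ} {f : ℝ → ℝ} {x y : ℝ → ℝ} {t₀ : ℝ}

lemma crossesDownAt_zero_of_pendulum (hx : ∀ t ≥ 0, HasDerivWithinAt x (y t) (Ici 0) t)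
    (hy : ∀ t ≥ 0, HasDerivWithinAt y (pendulumAccel u v f (x t) (y t) (t₀ + t)) (Ici 0) t)
    (hy0 : y 0 ≤ 0) (hv0 : ∀ t, |v (0, 0, t)| < 1) : CrossesDownAt x 0 := by
  refine crossesDownAt_of_hasDerivWithinAt hx hy hy0 fun t _ hxt hyt => ?_
  have := (abs_lt.1 (hv0 (t₀ + t))).2
  simp only [pendulumAccel, hxt, hyt, Real.sin_zero, Real.cos_zero]
  linarith

lemma crossesUpAt_pi_of_pendulum (hx : ∀ t ≥ 0, HasDerivWithinAt x (y t) (Ici 0) t)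
    (hy : ∀ t ≥ 0, HasDerivWithinAt y (pendulumAccel u v f (x t) (y t) (t₀ + t)) (Ici 0) t)
    (hy0 : 0 ≤ y 0) (hvπ : ∀ t, |v (Real.pi, 0, t)| < 1) : CrossesUpAt x Real.pi := by
  rw [← crossesDownAt_neg_iff]
  refine crossesDownAt_of_hasDerivWithinAt (y := -y) (fun t ht => (hx t ht).neg)
    (fun t ht => (hy t ht).neg) (by simpa using hy0) fun t _ hxt hyt => ?_
  have := (abs_lt.1 (hvπ (t₀ + t))).1
  simp only [Pi.neg_apply, neg_inj, neg_eq_zero] at hxt hyt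
  simp only [pendulumAccel, hxt, hyt, Real.sin_pi, Real.cos_pi]
  linarith

end Pendulum

theorem nonautonomous_pendulum_not_globally_attractive_general
    (u v : ℝ × ℝ × ℝ → ℝ) (f : ℝ → ℝ)
    (Φ : ℝ × ℝ → ℝ → ℝ → ℝ × ℝ)
    (hΦcont : ContinuousOn (fun q : (ℝ × ℝ) × ℝ × ℝ => Φ q.1 q.2.1 q.2.2) {q | 0 ≤ q.2.2})
    (hΦ0 : ∀ p t₀, Φ p t₀ 0 = p)
    (hΦadd : ∀ (p : ℝ × ℝ) (t₀ t s : ℝ), 0 ≤ t → 0 ≤ s →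
      Φ p t₀ (t + s) = Φ (Φ p t₀ t) (t₀ + t) s)
    (hode1 : ∀ (p : ℝ × ℝ) (t₀ : ℝ), ∀ t ≥ (0 : ℝ),
      HasDerivWithinAt (fun s => (Φ p t₀ s).1) ((Φ p t₀ t).2) (Set.Ici 0) t)
    (hode2 : ∀ (p : ℝ × ℝ) (t₀ : ℝ), ∀ t ≥ (0 : ℝ),
      HasDerivWithinAt (fun s => (Φ p t₀ s).2)
        (u ((Φ p t₀ t).1, (Φ p t₀ t).2, t₀ + t) * Real.sin (Φ p t₀ t).1
          - Real.cos (Φ p t₀ t).1 + v ((Φ p t₀ t).1, (Φ p t₀ t).2, t₀ + t)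
          + f (t₀ + t) * Real.sin (Φ p t₀ t).1) (Set.Ici 0) t)
    (hv0 : ∀ t : ℝ, |v (0, 0, t)| < 1) (hvπ : ∀ t : ℝ, |v (Real.pi, 0, t)| < 1)
    (hstab : ∀ O : Set (ℝ × ℝ), IsOpen O → (Real.pi / 2, (0 : ℝ)) ∈ O →
      ∃ V : Set (ℝ × ℝ), IsOpen V ∧ (Real.pi / 2, (0 : ℝ)) ∈ V ∧
        ∀ p ∈ V, ∀ t₀ ≥ (0 : ℝ), ∀ t ≥ (0 : ℝ), Φ p t₀ t ∈ O) :
    ∃ p : ℝ × ℝ, (∀ t ≥ (0 : ℝ), 0 < (Φ p 0 t).1 ∧ (Φ p 0 t).1 < Real.pi) ∧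
      ¬ Filter.Tendsto (fun t => Φ p 0 t) Filter.atTop (nhds (Real.pi / 2, (0 : ℝ))) := by
  have hflow : ContinuousOn (fun q : (ℝ × ℝ) × ℝ => Φ q.1 0 q.2) (univ ×ˢ Ici 0) :=
    hΦcont.comp (by fun_prop : Continuous fun q : (ℝ × ℝ) × ℝ => (q.1, ((0 : ℝ), q.2))).continuousOn
      fun _ hq => hq.2
  have hangle : ContinuousOn (fun q : ℝ × ℝ => (Φ (q.1, 0) 0 q.2).1) (univ ×ˢ Ici 0) :=
    continuous_fst.comp_continuousOn <| hflow.comp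
      (continuous_fst.prodMk continuous_const |>.prodMk continuous_snd).continuousOn
      fun q hq => ⟨mem_univ _, hq.2⟩
  have hconfined_not_open : ¬ IsOpen {s | ∀ t ≥ 0, (Φ (s, 0) 0 t).1 ∈ Ioo 0 Real.pi} :=
    not_isOpen_setOf_forall_mem_Ioo (x := fun s t => (Φ (s, 0) 0 t).1) Real.pi_pos hangle
      (fun s => congrArg Prod.fst (hΦ0 (s, 0) 0))
      (fun s _ => crossesDownAt_zero_of_pendulum (hode1 (s, 0) 0) (hode2 (s, 0) 0)
        (congrArg Prod.snd (hΦ0 (s, 0) 0)).le hv0)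
      (fun s _ => crossesUpAt_pi_of_pendulum (hode1 (s, 0) 0) (hode2 (s, 0) 0)
        (congrArg Prod.snd (hΦ0 (s, 0) 0)).ge hvπ)
  by_contra! hconv
  have hstrip : IsOpen (Prod.fst ⁻¹' Ioo 0 Real.pi : Set (ℝ × ℝ)) :=
    isOpen_Ioo.preimage continuous_fst
  obtain ⟨V, hV, hcV, hVO⟩ := hstab _ hstrip ⟨by positivity, by linarith [Real.pi_pos]⟩
  refine hconfined_not_open <| (isOpen_setOf_forall_mem_of_absorbing hflow hΦadd hstrip hV hVO
    fun p hp => ?_).preimage (continuous_id.prodMk continuous_const)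
  exact (((hconv p hp).eventually_mem (hV.mem_nhds hcV)).and (eventually_ge_atTop 0)).exists.imp
    fun T hT => ⟨hT.2, hT.1⟩

/-- The non-autonomous controlled inverted pendulum
`φ̈ = u(φ, φ̇, t)·sin φ - cos φ + v(φ, φ̇, t) + f(t)·sin φ` with smooth `u, v, f`,
generating a continuous semi-process `Φ` on `ℝ²` in the coordinates `(φ, φ̇)`.
If `|v(0,0,t)| < 1` and `|v(π,0,t)| < 1` for all `t`, and `(π/2, 0)` is a uniformly
Lyapunov stable equilibrium, then `(π/2, 0)` is not globally attractive: some
solution satisfies `0 < φ(t) < π` for all `t ≥ 0` and does not converge to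
`(π/2, 0)`. -/
theorem nonautonomous_pendulum_not_globally_attractive
    (u v : ℝ × ℝ × ℝ → ℝ) (f : ℝ → ℝ)
    (hu : ContDiff ℝ (⊤ : ℕ∞) u) (hv : ContDiff ℝ (⊤ : ℕ∞) v)
    (hf : ContDiff ℝ (⊤ : ℕ∞) f)
    (Φ : ℝ × ℝ → ℝ → ℝ → ℝ × ℝ)
    (hΦcont : ContinuousOn (fun q : (ℝ × ℝ) × ℝ × ℝ => Φ q.1 q.2.1 q.2.2) {q | 0 ≤ q.2.2})
    (hΦ0 : ∀ p t₀, Φ p t₀ 0 = p)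
    (hΦadd : ∀ (p : ℝ × ℝ) (t₀ t s : ℝ), 0 ≤ t → 0 ≤ s →
      Φ p t₀ (t + s) = Φ (Φ p t₀ t) (t₀ + t) s)
    (hode1 : ∀ (p : ℝ × ℝ) (t₀ : ℝ), ∀ t ≥ (0 : ℝ),
      HasDerivWithinAt (fun s => (Φ p t₀ s).1) ((Φ p t₀ t).2) (Set.Ici 0) t)
    (hode2 : ∀ (p : ℝ × ℝ) (t₀ : ℝ), ∀ t ≥ (0 : ℝ),
      HasDerivWithinAt (fun s => (Φ p t₀ s).2)
        (u ((Φ p t₀ t).1, (Φ p t₀ t).2, t₀ + t) * Real.sin (Φ p t₀ t).1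
          - Real.cos (Φ p t₀ t).1 + v ((Φ p t₀ t).1, (Φ p t₀ t).2, t₀ + t)
          + f (t₀ + t) * Real.sin (Φ p t₀ t).1) (Set.Ici 0) t)
    (hv0 : ∀ t : ℝ, |v (0, 0, t)| < 1) (hvπ : ∀ t : ℝ, |v (Real.pi, 0, t)| < 1)
    (hequil : ∀ t₀ ≥ (0 : ℝ), ∀ t ≥ (0 : ℝ), Φ (Real.pi / 2, 0) t₀ t = (Real.pi / 2, 0))
    (hstab : ∀ O : Set (ℝ × ℝ), IsOpen O → (Real.pi / 2, (0 : ℝ)) ∈ O →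
      ∃ V : Set (ℝ × ℝ), IsOpen V ∧ (Real.pi / 2, (0 : ℝ)) ∈ V ∧
        ∀ p ∈ V, ∀ t₀ ≥ (0 : ℝ), ∀ t ≥ (0 : ℝ), Φ p t₀ t ∈ O) :
    ∃ p : ℝ × ℝ, (∀ t ≥ (0 : ℝ), 0 < (Φ p 0 t).1 ∧ (Φ p 0 t).1 < Real.pi) ∧
      ¬ Filter.Tendsto (fun t => Φ p 0 t) Filter.atTop (nhds (Real.pi / 2, (0 : ℝ))) :=
  nonautonomous_pendulum_not_globally_attractive_general u v f Φ hΦcont hΦ0 hΦadd hode1 hode2 hv0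
    hvπ hstab
end
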